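/- arXiv:1607.04927 — 5 statements merged into one kernel-verified Lean document; each statement's English description precedes it below -/
import Mathlib

section
/- Let J' ⊆ J be subgroups of S_r with m = |J| and m' = |J'|, let F' be a GDH of type J' and let F be the minimum J-container of F'. Then (m'/m)·b_J(F) ≤ b_{J'}(F') ≤ b_J(F), with equality on the left if every edge of F contains exactly one edge of F' and equality on the right if every edge of F contains all m/m' possible edges of F'. Moreover, if every edge of F contains exactly k edges of F', then b_{J'}(F') = (k·m'/m)·b_J(F). -/
open Finset Filter

/-- A generalized directed hypergraph (GDH) of type `K`, where `K` is a subgroup of the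
symmetric group on `Fin r`: a set of `r`-tuples of vertices, each with pairwise distinct
entries, closed under the action of `K`. -/
structure GDH (r : ℕ) (K : Subgroup (Equiv.Perm (Fin r))) (V : Type) [DecidableEq V] where
  E : Finset (Fin r → V)
  inj : ∀ a ∈ E, Function.Injective a
  closed : ∀ a ∈ E, ∀ π ∈ K, (fun i => a (π i)) ∈ E

namespace GDH

variable {r : ℕ} {K K' : Subgroup (Equiv.Perm (Fin r))} {V W : Type} [DecidableEq V]
  [DecidableEq W]

/-- The number of edges `e(G) = |E|/m`, where an edge is a `K`-orbit contained in `E`. -/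
noncomputable def edgeCount (G : GDH r K V) : ℝ := (G.E.card : ℝ) / (Nat.card K)

/-- The normalizing factor `(r!/m) * C(n,r)`. -/
noncomputable def denom (r : ℕ) (K : Subgroup (Equiv.Perm (Fin r))) (n : ℕ) : ℝ :=
  ((r.factorial : ℝ) / (Nat.card K)) * (n.choose r)

/-- The edge density `d(G) = e(G) / ((r!/m) * C(n,r))`. -/
noncomputable def density [Fintype V] (G : GDH r K V) : ℝ :=
  G.edgeCount / denom r K (Fintype.card V)

/-- `G` contains a copy of `H`: there is an injective homomorphism from `H` to `G`. -/
def ContainsCopy (G : GDH r K V) (H : GDH r K W) : Prop :=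
  ∃ f : W → V, Function.Injective f ∧ ∀ a ∈ H.E, (fun i => f (a i)) ∈ G.E

/-- `G` is `𝓕`-free: it contains no copy of any member of the family `𝓕`. -/
def Free (G : GDH r K V) (𝓕 : Set ((k : ℕ) × GDH r K (Fin k))) : Prop :=
  ∀ F ∈ 𝓕, ¬ G.ContainsCopy F.2

/-- The extremal number `ex(n, 𝓕)`: the maximum of `e(G)` over `𝓕`-free GDHs on `n` vertices. -/
noncomputable def exNum (r : ℕ) (K : Subgroup (Equiv.Perm (Fin r))) (n : ℕ)
    (𝓕 : Set ((k : ℕ) × GDH r K (Fin k))) : ℝ :=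
  sSup {x : ℝ | ∃ G : GDH r K (Fin n), G.Free 𝓕 ∧ x = G.edgeCount}

/-- The sequence of extremal edge densities `ex(n,𝓕) / ((r!/m) C(n,r))`. -/
noncomputable def densitySeq (r : ℕ) (K : Subgroup (Equiv.Perm (Fin r)))
    (𝓕 : Set ((k : ℕ) × GDH r K (Fin k))) (n : ℕ) : ℝ :=
  exNum r K n 𝓕 / denom r K n

/-- `x` is the Turán density of `𝓕`. -/
def IsTuranDensity (r : ℕ) (K : Subgroup (Equiv.Perm (Fin r)))
    (𝓕 : Set ((k : ℕ) × GDH r K (Fin k))) (x : ℝ) : Prop :=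
  Tendsto (densitySeq r K 𝓕) atTop (nhds x)

/-- The sub-GDH of `G` induced on the image of an injective vertex map `f`. -/
def induce [Fintype W] (G : GDH r K V) (f : W → V) (hf : Function.Injective f) :
    GDH r K W where
  E := Finset.univ.filter (fun a : Fin r → W => (fun i => f (a i)) ∈ G.E)
  inj := by
    intro a ha
    rw [Finset.mem_filter] at ha
    exact fun i j hij => G.inj _ ha.2 (congrArg f hij)
  closed := by
    intro a ha π hπ
    rw [Finset.mem_filter] at ha ⊢
    exact ⟨Finset.mem_univ _, G.closed _ ha.2 π hπ⟩

/-- `α` is a jump for type `K`. -/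
def IsJump (r : ℕ) (K : Subgroup (Equiv.Perm (Fin r))) (α : ℝ) : Prop :=
  ∃ c > (0 : ℝ), ∀ ε > (0 : ℝ), ∀ l : ℕ, 0 < l → ∃ n₀ : ℕ, ∀ n, n₀ ≤ n →
    ∀ G : GDH r K (Fin n), (α + ε) * denom r K n ≤ G.edgeCount →
      ∃ f : Fin l → Fin n, ∃ hf : Function.Injective f,
        (α + c) * denom r K l ≤ (G.induce f hf).edgeCount

/-- The `t`-blowup of `G`: each vertex `v` is replaced by `t v` copies. -/
def blowup [Fintype V] (G : GDH r K V) (t : V → ℕ) : GDH r K ((v : V) × Fin (t v)) where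
  E := Finset.univ.filter
    (fun a : Fin r → ((v : V) × Fin (t v)) => (fun i => (a i).1) ∈ G.E)
  inj := by
    intro a ha
    rw [Finset.mem_filter] at ha
    exact fun i j hij => G.inj _ ha.2 (congrArg Sigma.fst hij)
  closed := by
    intro a ha π hπ
    rw [Finset.mem_filter] at ha ⊢
    exact ⟨Finset.mem_univ _, G.closed _ ha.2 π hπ⟩

/-- Relabel the vertices of a GDH along a bijection. -/
def relabel (G : GDH r K V) (e : V ≃ W) : GDH r K W where
  E := G.E.image (fun a => fun i => e (a i))
  inj := by
    intro b hb
    rw [Finset.mem_image] at hb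
    obtain ⟨a, ha, rfl⟩ := hb
    exact fun i j hij => G.inj a ha (e.injective hij)
  closed := by
    intro b hb π hπ
    rw [Finset.mem_image] at hb ⊢
    obtain ⟨a, ha, rfl⟩ := hb
    exact ⟨fun i => a (π i), G.closed a ha π hπ, rfl⟩

/-- A GDH on an abstract finite vertex type, viewed as a GDH on `Fin n`. -/
noncomputable def toFin [Fintype V] (G : GDH r K V) : (n : ℕ) × GDH r K (Fin n) :=
  ⟨Fintype.card V, G.relabel (Fintype.equivFin V)⟩

/-- The edge polynomial `p_G(x) = Σ_R e_R Π_{i∈R} x_i = (1/m) Σ_{a∈E} Π_i x_{a i}`. -/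
noncomputable def edgePoly (G : GDH r K V) (x : V → ℝ) : ℝ :=
  (∑ a ∈ G.E, ∏ i, x (a i)) / (Nat.card K)

/-- The blowup density `b(G) = m * max {p_G(x) : x in the standard simplex}`. -/
noncomputable def blowupDensity [Fintype V] (G : GDH r K V) : ℝ :=
  (Nat.card K : ℝ) * sSup (G.edgePoly '' stdSimplex ℝ V)

open scoped Classical in
/-- The single-edge GDH of type `K` on `r` vertices: its tuple set is exactly the
`K`-orbit of the identity tuple. -/
noncomputable def singleEdge (r : ℕ) (K : Subgroup (Equiv.Perm (Fin r))) :
    GDH r K (Fin r) where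
  E := Finset.univ.filter (fun a : Fin r → Fin r => ∃ π ∈ K, a = ⇑π)
  inj := by
    intro a ha
    rw [Finset.mem_filter] at ha
    obtain ⟨π, hπ, rfl⟩ := ha.2
    exact π.injective
  closed := by
    intro a ha σ hσ
    rw [Finset.mem_filter] at ha ⊢
    obtain ⟨π, hπ, rfl⟩ := ha.2
    refine ⟨Finset.mem_univ _, π * σ, mul_mem hπ hσ, ?_⟩
    ext i
    simp [Equiv.Perm.mul_apply]

/-- The `K`-orbit of a tuple `a` (an edge, viewed as a set of tuples). -/
def orbitSet (K : Subgroup (Equiv.Perm (Fin r))) (a : Fin r → V) : Set (Fin r → V) :=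
  {b | ∃ π ∈ K, b = fun i => a (π i)}

/-- A GDH `F` of type `K` contains a GDH `F'` of type `K'` on the same vertex set:
every edge (`K'`-orbit) of `F'` is contained in some edge (`K`-orbit) of `F`. -/
def Contains (F : GDH r K V) (F' : GDH r K' V) : Prop :=
  ∀ a ∈ F'.E, ∃ b ∈ F.E, orbitSet K' a ⊆ orbitSet K b

/-- `F` is the minimum `K`-container of `F'`: it contains `F'` and every edge of `F`
contains at least one edge of `F'`. -/
def IsMinContainer (F : GDH r K V) (F' : GDH r K' V) : Prop :=
  F.Contains F' ∧ ∀ b ∈ F.E, ∃ a ∈ F'.E, orbitSet K' a ⊆ orbitSet K b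

/-- The number of edges of `F'` contained in the edge of type `K` represented by
the tuple `b`. -/
noncomputable def edgesWithin (F' : GDH r K' V) (K : Subgroup (Equiv.Perm (Fin r)))
    (b : Fin r → V) : ℕ :=
  {O : Set (Fin r → V) | (∃ a ∈ F'.E, O = orbitSet K' a) ∧ O ⊆ orbitSet K b}.ncard

/-- `α` is a demonstrated nonjump for type `K`. -/
def IsDemoNonjump (r : ℕ) (K : Subgroup (Equiv.Perm (Fin r))) (α : ℝ) : Prop :=
  ∃ G : ℕ → (k : ℕ) × GDH r K (Fin k),
    (∀ n, α < blowupDensity (G n).2) ∧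
    ∀ l : ℕ, 0 < l → ∃ n₀ : ℕ, ∀ n, n₀ ≤ n → ∀ s : ℕ, s ≤ l →
      ∀ f : Fin s → Fin (G n).1, ∀ hf : Function.Injective f,
        blowupDensity ((G n).2.induce f hf) ≤ α

end GDH

section Aux
set_option linter.unusedSectionVars false

namespace GDH

variable {r : ℕ} {K J J' : Subgroup (Equiv.Perm (Fin r))} {V : Type} [DecidableEq V]

lemma mem_orbitSet_self (K : Subgroup (Equiv.Perm (Fin r))) (a : Fin r → V) :
    a ∈ orbitSet K a :=
  ⟨1, one_mem K, by funext i; simp⟩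

lemma orbitSet_subset' {a b : Fin r → V} (h : b ∈ orbitSet K a) :
    orbitSet K b ⊆ orbitSet K a := by
  obtain ⟨π, hπ, rfl⟩ := h
  rintro c ⟨σ, hσ, rfl⟩
  exact ⟨π * σ, mul_mem hπ hσ, by funext i; simp [Equiv.Perm.mul_apply]⟩

lemma mem_orbitSet_symm {a b : Fin r → V} (h : b ∈ orbitSet K a) :
    a ∈ orbitSet K b := by
  obtain ⟨π, hπ, rfl⟩ := h
  exact ⟨π⁻¹, inv_mem hπ, by funext i; simp⟩

lemma orbitSet_eq' {a b : Fin r → V} (h : b ∈ orbitSet K a) :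
    orbitSet K b = orbitSet K a :=
  le_antisymm (orbitSet_subset' h) (orbitSet_subset' (mem_orbitSet_symm h))

lemma orbitSet_mono (hJ : J' ≤ J) (a : Fin r → V) : orbitSet J' a ⊆ orbitSet J a := by
  rintro b ⟨π, hπ, rfl⟩
  exact ⟨π, hJ hπ, rfl⟩

lemma orbitSet_eq_image (K : Subgroup (Equiv.Perm (Fin r))) (a : Fin r → V) :
    orbitSet K a = (fun π : Equiv.Perm (Fin r) => fun i => a (π i)) '' (K : Set _) := by
  ext b
  simp only [orbitSet, Set.mem_setOf_eq, Set.mem_image, SetLike.mem_coe]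
  constructor
  · rintro ⟨π, hπ, rfl⟩; exact ⟨π, hπ, rfl⟩
  · rintro ⟨π, hπ, rfl⟩; exact ⟨π, hπ, rfl⟩

lemma orbitSet_ncard {a : Fin r → V} (ha : Function.Injective a)
    (K : Subgroup (Equiv.Perm (Fin r))) : (orbitSet K a).ncard = Nat.card K := by
  rw [orbitSet_eq_image, Set.ncard_image_of_injOn, ← Nat.card_coe_set_eq]
  · rfl
  · intro π _ σ _ h
    exact Equiv.ext fun i => ha (congrFun h i)

lemma orbitSet_finite (K : Subgroup (Equiv.Perm (Fin r))) (a : Fin r → V) :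
    (orbitSet K a).Finite := by
  rw [orbitSet_eq_image]
  exact (Set.toFinite _).image _

lemma subE (F' : GDH r J' V) (F : GDH r J V) (hmin : F.IsMinContainer F') :
    F'.E ⊆ F.E := by
  intro a ha
  obtain ⟨b, hb, hsub⟩ := hmin.1 a ha
  obtain ⟨π, hπ, rfl⟩ := hsub (mem_orbitSet_self J' a)
  exact F.closed b hb π hπ

open scoped Classical in
lemma filter_card (hJ : J' ≤ J) (F' : GDH r J' V) {c : Fin r → V}
    (hc : Function.Injective c) :
    (F'.E.filter (· ∈ orbitSet J c)).card = F'.edgesWithin J c * Nat.card J' := by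
  classical
  set T := F'.E.filter (· ∈ orbitSet J c) with hT
  set g : (Fin r → V) → Set (Fin r → V) := fun a => orbitSet J' a with hg
  have hmemT : ∀ a, a ∈ T ↔ a ∈ F'.E ∧ a ∈ orbitSet J c := by
    intro a; rw [hT, Finset.mem_filter]
  have hS : {O : Set (Fin r → V) | (∃ a ∈ F'.E, O = orbitSet J' a) ∧ O ⊆ orbitSet J c}
      = ↑(T.image g) := by
    ext O
    simp only [Set.mem_setOf_eq, Finset.coe_image, Set.mem_image, Finset.mem_coe]
    constructor
    · rintro ⟨⟨a, ha, rfl⟩, hsub⟩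
      exact ⟨a, (hmemT a).2 ⟨ha, hsub (mem_orbitSet_self J' a)⟩, rfl⟩
    · rintro ⟨a, haT, rfl⟩
      obtain ⟨ha, hac⟩ := (hmemT a).1 haT
      exact ⟨⟨a, ha, rfl⟩, (orbitSet_mono hJ a).trans (orbitSet_subset' hac)⟩
  have hw : F'.edgesWithin J c = (T.image g).card := by
    rw [edgesWithin, hS, Set.ncard_coe_finset]
  have hfiber : ∀ O ∈ T.image g, (T.filter fun a => g a = O).card = Nat.card J' := by
    intro O hO
    obtain ⟨a₀, ha₀T, rfl⟩ := Finset.mem_image.1 hO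
    obtain ⟨ha₀E, ha₀c⟩ := (hmemT a₀).1 ha₀T
    have hset : ↑(T.filter fun a => g a = g a₀) = orbitSet J' a₀ := by
      ext a
      simp only [Finset.coe_filter, Set.mem_setOf_eq]
      constructor
      · rintro ⟨-, hga⟩
        have h0 : a ∈ g a := mem_orbitSet_self J' a
        rw [hga] at h0
        exact h0
      · rintro ⟨σ, hσ, rfl⟩
        have h1 : (fun i => a₀ (σ i)) ∈ F'.E := F'.closed a₀ ha₀E σ hσ
        have h2 : (fun i => a₀ (σ i)) ∈ orbitSet J c :=
          (orbitSet_subset' ha₀c) ((orbitSet_mono hJ a₀) ⟨σ, hσ, rfl⟩)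
        exact ⟨(hmemT _).2 ⟨h1, h2⟩, orbitSet_eq' ⟨σ, hσ, rfl⟩⟩
    have h3 := orbitSet_ncard (F'.inj a₀ ha₀E) J'
    rw [← hset, Set.ncard_coe_finset] at h3
    exact h3
  rw [hw, Finset.card_eq_sum_card_image g T]
  calc ∑ O ∈ T.image g, (T.filter fun a => g a = O).card
      = ∑ _O ∈ T.image g, Nat.card J' := Finset.sum_congr rfl hfiber
    _ = (T.image g).card * Nat.card J' := by rw [Finset.sum_const, smul_eq_mul]

open scoped Classical in
lemma filter_card_le (F' : GDH r J' V) {c : Fin r → V} (hc : Function.Injective c) :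
    (F'.E.filter (· ∈ orbitSet J c)).card ≤ Nat.card J := by
  have h1 : ↑(F'.E.filter (· ∈ orbitSet J c)) ⊆ orbitSet J c := by
    intro a ha
    exact (Finset.mem_filter.1 ha).2
  calc (F'.E.filter (· ∈ orbitSet J c)).card
      = (↑(F'.E.filter (· ∈ orbitSet J c)) : Set (Fin r → V)).ncard :=
        (Set.ncard_coe_finset _).symm
    _ ≤ (orbitSet J c).ncard := Set.ncard_le_ncard h1 (orbitSet_finite J c)
    _ = Nat.card J := orbitSet_ncard hc J

open scoped Classical in
lemma filter_card_F (F : GDH r J V) {a : Fin r → V} (haE : a ∈ F.E) :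
    (F.E.filter (fun cc => a ∈ orbitSet J cc)).card = Nat.card J := by
  have hset : ↑(F.E.filter (fun cc => a ∈ orbitSet J cc)) = orbitSet J a := by
    ext cc
    simp only [Finset.coe_filter, Set.mem_setOf_eq]
    constructor
    · rintro ⟨-, h⟩; exact mem_orbitSet_symm h
    · intro h
      refine ⟨?_, mem_orbitSet_symm h⟩
      obtain ⟨π, hπ, rfl⟩ := h
      exact F.closed a haE π hπ
  have h3 := orbitSet_ncard (F.inj a haE) J
  rw [← hset, Set.ncard_coe_finset] at h3
  exact h3

open scoped Pointwise in
lemma sSup_image_mul {α : Type*} (s : Set α) (g : α → ℝ) (c : ℝ) (hc : 0 ≤ c) :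
    sSup ((fun x => c * g x) '' s) = c * sSup (g '' s) := by
  have h : (fun x => c * g x) '' s = c • (g '' s) := by
    rw [← Set.image_smul, Set.image_image]
    simp only [smul_eq_mul]
  rw [h, Real.sSup_smul_of_nonneg hc, smul_eq_mul]

lemma sSup_image_le_sSup_image {α : Type*} {s : Set α} {g h : α → ℝ}
    (hb : BddAbove (h '' s)) (hle : ∀ x ∈ s, g x ≤ h x) :
    sSup (g '' s) ≤ sSup (h '' s) := by
  rcases s.eq_empty_or_nonempty with rfl | hs
  · simp
  · apply csSup_le (hs.image g)
    rintro _ ⟨x, hx, rfl⟩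
    exact (hle x hx).trans (le_csSup hb ⟨x, hx, rfl⟩)

lemma bddAbove_sum_image [Fintype V] (E : Finset (Fin r → V)) :
    BddAbove ((fun x : V → ℝ => ∑ a ∈ E, ∏ i, x (a i)) '' stdSimplex ℝ V) := by
  refine ⟨E.card, ?_⟩
  rintro _ ⟨x, hx, rfl⟩
  calc ∑ a ∈ E, ∏ i, x (a i) ≤ ∑ _a ∈ E, 1 := by
        apply Finset.sum_le_sum
        intro a _
        apply Finset.prod_le_one
        · intro i _; exact hx.1 _
        · intro i _
          calc x (a i) ≤ ∑ v, x v :=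
                Finset.single_le_sum (fun v _ => hx.1 v) (Finset.mem_univ _)
            _ = 1 := hx.2
    _ = E.card := by simp

lemma blowupDensity_eq_sSup [Fintype V] (G : GDH r K V) :
    G.blowupDensity
      = sSup ((fun x : V → ℝ => ∑ a ∈ G.E, ∏ i, x (a i)) '' stdSimplex ℝ V) := by
  have hm : (0:ℝ) < (Nat.card K : ℝ) := by exact_mod_cast Nat.card_pos
  rw [blowupDensity, ← sSup_image_mul _ _ _ hm.le]
  congr 1
  apply Set.image_congr
  intro x _
  rw [edgePoly]
  field_simp

end GDH

end Aux

/-- Let `J' ⊆ J` be subgroups of `S_r`, `F'` a GDH of type `J'`, and `F` its minimum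
`J`-container. Then `(m'/m)·b_J(F) ≤ b_{J'}(F') ≤ b_J(F)`, with equality on the left if
every edge of `F` contains exactly one edge of `F'`, and on the right if every edge of
`F` contains all `m/m'` possible edges of `F'`; and if every edge of `F` contains exactly
`k` edges of `F'`, then `b_{J'}(F') = (k·m'/m)·b_J(F)`. -/
theorem stmt2 (r : ℕ) (hr : 1 ≤ r) (J' J : Subgroup (Equiv.Perm (Fin r))) (hJ : J' ≤ J)
    (V : Type) [DecidableEq V] [Fintype V]
    (F' : GDH r J' V) (F : GDH r J V) (hmin : F.IsMinContainer F') :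
    (((Nat.card J' : ℝ) / (Nat.card J : ℝ)) * F.blowupDensity ≤ F'.blowupDensity ∧
      F'.blowupDensity ≤ F.blowupDensity) ∧
    ((∀ b ∈ F.E, F'.edgesWithin J b = 1) →
      ((Nat.card J' : ℝ) / (Nat.card J : ℝ)) * F.blowupDensity = F'.blowupDensity) ∧
    ((∀ b ∈ F.E, F'.edgesWithin J b = Nat.card J / Nat.card J') →
      F'.blowupDensity = F.blowupDensity) ∧
    (∀ k : ℕ, (∀ b ∈ F.E, F'.edgesWithin J b = k) →
      F'.blowupDensity =
        (((k : ℝ) * (Nat.card J' : ℝ)) / (Nat.card J : ℝ)) * F.blowupDensity) := by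
  classical
  have hmpos : (0:ℝ) < (Nat.card J : ℝ) := by exact_mod_cast Nat.card_pos
  have hm'pos : (0:ℝ) < (Nat.card J' : ℝ) := by exact_mod_cast Nat.card_pos
  -- pointwise key identity
  have key : ∀ x : V → ℝ,
      (Nat.card J : ℝ) * ∑ a ∈ F'.E, ∏ i, x (a i)
        = (Nat.card J' : ℝ) * ∑ c ∈ F.E, (F'.edgesWithin J c : ℝ) * ∏ i, x (c i) := by
    intro x
    have hswap :
        ∑ c ∈ F.E, ∑ a ∈ F'.E, (if a ∈ GDH.orbitSet J c then ∏ i, x (a i) else 0)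
          = ∑ a ∈ F'.E, ∑ c ∈ F.E, (if a ∈ GDH.orbitSet J c then ∏ i, x (a i) else 0) :=
      Finset.sum_comm
    have hL : ∀ a ∈ F'.E,
        ∑ c ∈ F.E, (if a ∈ GDH.orbitSet J c then ∏ i, x (a i) else 0)
          = (Nat.card J : ℝ) * ∏ i, x (a i) := by
      intro a ha
      rw [← Finset.sum_filter, Finset.sum_const, nsmul_eq_mul,
        GDH.filter_card_F F (GDH.subE F' F hmin ha)]
    have hR : ∀ c ∈ F.E,
        ∑ a ∈ F'.E, (if a ∈ GDH.orbitSet J c then ∏ i, x (a i) else 0)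
          = (F'.edgesWithin J c : ℝ) * (Nat.card J' : ℝ) * ∏ i, x (c i) := by
      intro c hc
      rw [← Finset.sum_filter]
      have hconst : ∀ a ∈ F'.E.filter (· ∈ GDH.orbitSet J c),
          ∏ i, x (a i) = ∏ i, x (c i) := by
        intro a ha
        obtain ⟨π, hπ, rfl⟩ := (Finset.mem_filter.1 ha).2
        exact Equiv.prod_comp π fun i => x (c i)
      rw [Finset.sum_congr rfl hconst, Finset.sum_const, nsmul_eq_mul,
        GDH.filter_card hJ F' (F.inj c hc)]
      push_cast
      ring
    calc (Nat.card J : ℝ) * ∑ a ∈ F'.E, ∏ i, x (a i)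
        = ∑ a ∈ F'.E, (Nat.card J : ℝ) * ∏ i, x (a i) := Finset.mul_sum _ _ _
      _ = ∑ a ∈ F'.E, ∑ c ∈ F.E, (if a ∈ GDH.orbitSet J c then ∏ i, x (a i) else 0) :=
          (Finset.sum_congr rfl hL).symm
      _ = ∑ c ∈ F.E, ∑ a ∈ F'.E, (if a ∈ GDH.orbitSet J c then ∏ i, x (a i) else 0) :=
          hswap.symm
      _ = ∑ c ∈ F.E, (F'.edgesWithin J c : ℝ) * (Nat.card J' : ℝ) * ∏ i, x (c i) :=
          Finset.sum_congr rfl hR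
      _ = (Nat.card J' : ℝ) * ∑ c ∈ F.E, (F'.edgesWithin J c : ℝ) * ∏ i, x (c i) := by
          rw [Finset.mul_sum]
          exact Finset.sum_congr rfl fun c _ => by ring
  have hbF := GDH.blowupDensity_eq_sSup F
  have hbF' := GDH.blowupDensity_eq_sSup F'
  -- uniform-k equality (used for goals 2, 3, 4)
  have hkgen : ∀ k : ℕ, (∀ b ∈ F.E, F'.edgesWithin J b = k) →
      F'.blowupDensity
        = (((k : ℝ) * (Nat.card J' : ℝ)) / (Nat.card J : ℝ)) * F.blowupDensity := by
    intro k hk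
    have hptw : ∀ x : V → ℝ,
        ∑ a ∈ F'.E, ∏ i, x (a i)
          = (((k : ℝ) * (Nat.card J' : ℝ)) / (Nat.card J : ℝ))
              * ∑ c ∈ F.E, ∏ i, x (c i) := by
      intro x
      have h1 := key x
      have h2 : ∑ c ∈ F.E, (F'.edgesWithin J c : ℝ) * ∏ i, x (c i)
          = (k : ℝ) * ∑ c ∈ F.E, ∏ i, x (c i) := by
        rw [Finset.mul_sum]
        refine Finset.sum_congr rfl fun c hc => ?_
        rw [hk c hc]
      rw [h2] at h1
      rw [div_mul_eq_mul_div, eq_div_iff hmpos.ne']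
      linear_combination h1
    rw [hbF', hbF]
    have himg : (fun x : V → ℝ => ∑ a ∈ F'.E, ∏ i, x (a i)) '' stdSimplex ℝ V
        = (fun x : V → ℝ => (((k : ℝ) * (Nat.card J' : ℝ)) / (Nat.card J : ℝ))
            * ∑ c ∈ F.E, ∏ i, x (c i)) '' stdSimplex ℝ V := by
      apply Set.image_congr
      intro x _
      exact hptw x
    rw [himg, GDH.sSup_image_mul]
    positivity
  -- bounds on edgesWithin
  have hw1 : ∀ c ∈ F.E, 1 ≤ F'.edgesWithin J c := by
    intro c hcE
    by_contra h
    push_neg at h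
    interval_cases h' : F'.edgesWithin J c
    obtain ⟨a, ha, hsub⟩ := hmin.2 c hcE
    have haT : a ∈ F'.E.filter (· ∈ GDH.orbitSet J c) :=
      Finset.mem_filter.2 ⟨ha, hsub (GDH.mem_orbitSet_self J' a)⟩
    have := GDH.filter_card hJ F' (F.inj c hcE)
    rw [h'] at this
    simp only [Nat.zero_mul, Finset.card_eq_zero] at this
    rw [this] at haT
    exact absurd haT (Finset.notMem_empty a)
  have hwle : ∀ c ∈ F.E, (F'.edgesWithin J c : ℝ) * (Nat.card J' : ℝ) ≤ (Nat.card J : ℝ) := by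
    intro c hcE
    have h1 := GDH.filter_card hJ F' (F.inj c hcE)
    have h2 := GDH.filter_card_le (J := J) F' (F.inj c hcE)
    rw [h1] at h2
    exact_mod_cast h2
  -- pointwise inequalities on the simplex
  have hfnn : ∀ x ∈ stdSimplex ℝ V, ∀ c : Fin r → V, 0 ≤ ∏ i, x (c i) :=
    fun x hx c => Finset.prod_nonneg fun i _ => hx.1 _
  have hlow : ∀ x ∈ stdSimplex ℝ V,
      ((Nat.card J' : ℝ) / (Nat.card J : ℝ)) * ∑ c ∈ F.E, ∏ i, x (c i)
        ≤ ∑ a ∈ F'.E, ∏ i, x (a i) := by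
    intro x hx
    have h1 := key x
    have h2 : ∑ c ∈ F.E, ∏ i, x (c i)
        ≤ ∑ c ∈ F.E, (F'.edgesWithin J c : ℝ) * ∏ i, x (c i) := by
      refine Finset.sum_le_sum fun c hc => ?_
      have : (1 : ℝ) ≤ (F'.edgesWithin J c : ℝ) := by exact_mod_cast hw1 c hc
      exact le_mul_of_one_le_left (hfnn x hx c) this
    rw [div_mul_eq_mul_div, div_le_iff₀ hmpos]
    calc (Nat.card J' : ℝ) * ∑ c ∈ F.E, ∏ i, x (c i)
        ≤ (Nat.card J' : ℝ) * ∑ c ∈ F.E, (F'.edgesWithin J c : ℝ) * ∏ i, x (c i) := by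
          exact mul_le_mul_of_nonneg_left h2 hm'pos.le
      _ = (Nat.card J : ℝ) * ∑ a ∈ F'.E, ∏ i, x (a i) := h1.symm
      _ = (∑ a ∈ F'.E, ∏ i, x (a i)) * (Nat.card J : ℝ) := by ring
  have hhigh : ∀ x ∈ stdSimplex ℝ V,
      ∑ a ∈ F'.E, ∏ i, x (a i) ≤ ∑ c ∈ F.E, ∏ i, x (c i) := by
    intro x hx
    have h1 := key x
    have h2 : (Nat.card J' : ℝ) * ∑ c ∈ F.E, (F'.edgesWithin J c : ℝ) * ∏ i, x (c i)
        ≤ (Nat.card J : ℝ) * ∑ c ∈ F.E, ∏ i, x (c i) := by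
      rw [Finset.mul_sum, Finset.mul_sum]
      refine Finset.sum_le_sum fun c hc => ?_
      have h3 : (F'.edgesWithin J c : ℝ) * (Nat.card J' : ℝ) ≤ (Nat.card J : ℝ) :=
        hwle c hc
      calc (Nat.card J' : ℝ) * ((F'.edgesWithin J c : ℝ) * ∏ i, x (c i))
          = ((F'.edgesWithin J c : ℝ) * (Nat.card J' : ℝ)) * ∏ i, x (c i) := by ring
        _ ≤ (Nat.card J : ℝ) * ∏ i, x (c i) :=
            mul_le_mul_of_nonneg_right h3 (hfnn x hx c)
    rw [← h1] at h2
    exact le_of_mul_le_mul_left h2 hmpos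
  refine ⟨⟨?_, ?_⟩, ?_, ?_, hkgen⟩
  · -- (m'/m) b(F) ≤ b(F')
    rw [hbF, hbF', ← GDH.sSup_image_mul (stdSimplex ℝ V)
      (fun x => ∑ c ∈ F.E, ∏ i, x (c i)) _ (by positivity)]
    exact GDH.sSup_image_le_sSup_image (GDH.bddAbove_sum_image F'.E) hlow
  · rw [hbF, hbF']
    exact GDH.sSup_image_le_sSup_image (GDH.bddAbove_sum_image F.E) hhigh
  · intro h1
    have := hkgen 1 h1
    rw [this]
    push_cast
    ring
  · intro hk
    have hdvd : Nat.card J' ∣ Nat.card J := Subgroup.card_dvd_of_le hJ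
    have := hkgen (Nat.card J / Nat.card J') hk
    rw [this]
    have hc : ((Nat.card J / Nat.card J' : ℕ) : ℝ) * (Nat.card J' : ℝ) = (Nat.card J : ℝ) := by
      exact_mod_cast congrArg (Nat.cast : ℕ → ℝ) (Nat.div_mul_cancel hdvd)
    rw [hc, div_self hmpos.ne']
    ring
end

section
/- (Supersaturation) Let F be a GDH of type J on k vertices and let ε > 0. Then there exist a constant c = c(F,ε) > 0 and n_0 = n_0(F,ε) such that every GDH G of type J on n ≥ n_0 vertices with edge density d(G) ≥ π(F) + ε has at least c·C(n,k) distinct k-element subsets S of its vertices such that the sub-GDH of G induced on S contains a copy of F. -/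
open Finset Filter

lemma card_supersets {α : Type} [Fintype α] [DecidableEq α] {k l : ℕ} (T : Finset α)
    (hT : T.card = k) (hkl : k ≤ l) :
    ((Finset.powersetCard l (Finset.univ : Finset α)).filter (fun S => T ⊆ S)).card
      = (Fintype.card α - k).choose (l - k) := by
  have hb : ((Finset.powersetCard l (Finset.univ : Finset α)).filter (fun S => T ⊆ S)).card
      = (Finset.powersetCard (l - k) Tᶜ).card := by
    apply Finset.card_bij' (fun S _ => S \ T) (fun U _ => U ∪ T)
    · intro S hS
      simp only [Finset.mem_filter, Finset.mem_powersetCard] at hS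
      obtain ⟨⟨-, hScard⟩, hTS⟩ := hS
      rw [Finset.mem_powersetCard]
      constructor
      · intro x hx
        simp only [Finset.mem_sdiff] at hx
        simp [hx.2]
      · rw [Finset.card_sdiff_of_subset hTS, hScard, hT]
    · intro U hU
      rw [Finset.mem_powersetCard] at hU
      have hdisj : Disjoint U T := by
        rw [Finset.disjoint_left]
        intro x hxU hxT
        have := hU.1 hxU
        simp at this
        exact this hxT
      simp only [Finset.mem_filter, Finset.mem_powersetCard]
      refine ⟨⟨Finset.subset_univ _, ?_⟩, Finset.subset_union_right⟩
      rw [Finset.card_union_of_disjoint hdisj, hU.2, hT]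
      omega
    · intro S hS
      simp only [Finset.mem_filter] at hS
      exact Finset.sdiff_union_of_subset hS.2
    · intro U hU
      rw [Finset.mem_powersetCard] at hU
      have hdisj : Disjoint U T := by
        rw [Finset.disjoint_left]
        intro x hxU hxT
        have := hU.1 hxU
        simp at this
        exact this hxT
      exact Finset.union_sdiff_cancel_right hdisj
  rw [hb, Finset.card_powersetCard, Finset.card_compl, hT]

/-- Supersaturation: if `F` is a GDH of type `J` on `k` vertices, `ε > 0`, and `π(F)` is
the Turán density of `F`, then there are `c > 0` and `n₀` such that every GDH `G` of type
`J` on `n ≥ n₀` vertices with edge density at least `π(F) + ε` has at least `c·C(n,k)`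
`k`-subsets `S` of its vertices whose induced sub-GDH contains a copy of `F`. -/
theorem stmt3 (r : ℕ) (hr : 1 ≤ r) (J : Subgroup (Equiv.Perm (Fin r)))
    (k : ℕ) (F : GDH r J (Fin k)) (πF : ℝ)
    (hπ : GDH.IsTuranDensity r J {⟨k, F⟩} πF) (ε : ℝ) (hε : 0 < ε) :
    ∃ c > (0 : ℝ), ∃ n₀ : ℕ, ∀ n, n₀ ≤ n → ∀ G : GDH r J (Fin n),
      πF + ε ≤ G.density →
      c * (n.choose k : ℝ) ≤
        ({S : Finset (Fin n) | S.card = k ∧ ∃ f : Fin k → Fin n,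
          Function.Injective f ∧ (∀ i, f i ∈ S) ∧
          ∀ a ∈ F.E, (fun i => f (a i)) ∈ G.E} : Set (Finset (Fin n))).ncard := by
  classical

  set m : ℕ := Nat.card J with hm
  have hm0 : 0 < m := Nat.card_pos
  have hmR : (0:ℝ) < (m:ℝ) := by exact_mod_cast hm0
  -- basic positivity facts about exNum / densitySeq
  have hbdd : ∀ l' : ℕ, BddAbove {x : ℝ | ∃ G : GDH r J (Fin l'), G.Free {⟨k, F⟩} ∧ x = G.edgeCount} := by
    intro l'
    refine ⟨((l' ^ r : ℕ) : ℝ), ?_⟩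
    rintro x ⟨G', -, rfl⟩
    have h1 : (G'.E.card : ℝ) ≤ ((l' ^ r : ℕ) : ℝ) := by
      have := Finset.card_le_univ G'.E
      rw [Fintype.card_fun, Fintype.card_fin, Fintype.card_fin] at this
      exact_mod_cast this
    calc G'.edgeCount = (G'.E.card : ℝ) / (m:ℝ) := rfl
      _ ≤ (G'.E.card : ℝ) := by
          apply div_le_self (by positivity)
          exact_mod_cast hm0
      _ ≤ _ := h1
  have hds_nonneg : ∀ n', 0 ≤ GDH.densitySeq r J {⟨k, F⟩} n' := by
    intro n'
    apply div_nonneg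
    · unfold GDH.exNum
      rcases Set.eq_empty_or_nonempty
          {x : ℝ | ∃ G : GDH r J (Fin n'), G.Free {⟨k, F⟩} ∧ x = G.edgeCount} with h | h
      · rw [h, Real.sSup_empty]
      · obtain ⟨x, G', hG', rfl⟩ := h
        refine le_trans ?_ (le_csSup (hbdd n') ⟨G', hG', rfl⟩)
        have : (0:ℝ) ≤ (G'.E.card : ℝ) / (m:ℝ) := by positivity
        exact this
    · unfold GDH.denom
      positivity
  have hπ0 : 0 ≤ πF := ge_of_tendsto' hπ hds_nonneg
  -- choose l
  obtain ⟨n₁, hn₁⟩ := Filter.eventually_atTop.mp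
    (hπ.eventually_lt_const (show πF < πF + ε / 2 by linarith))
  set l : ℕ := max (max n₁ r) k with hl
  have hrl : r ≤ l := le_trans (le_max_right n₁ r) (le_max_left _ _)
  have hkl : k ≤ l := le_max_right _ _
  have hdl : GDH.densitySeq r J {⟨k, F⟩} l < πF + ε / 2 :=
    hn₁ l (le_trans (le_max_left n₁ r) (le_max_left _ _))
  -- main constants
  set A : ℝ := ((r.factorial * l.choose r : ℕ) : ℝ) with hA
  set B : ℝ := ((l ^ r : ℕ) : ℝ) with hB
  have hl0 : 0 < l := lt_of_lt_of_le hr hrl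
  have hApos : (0:ℝ) < A := by
    rw [hA]
    exact_mod_cast Nat.mul_pos r.factorial_pos (Nat.choose_pos hrl)
  have hBpos : (0:ℝ) < B := by
    rw [hB]
    exact_mod_cast Nat.pow_pos (n := r) hl0
  have hClk : (0:ℝ) < ((l.choose k : ℕ) : ℝ) := by exact_mod_cast Nat.choose_pos hkl
  refine ⟨ε * A / (2 * B * (l.choose k : ℝ)), by positivity, l, ?_⟩
  intro n hn G hden
  have hln : l ≤ n := hn
  have hrn : r ≤ n := le_trans hrl hln
  have hdenl : GDH.denom r J l = A / (m:ℝ) := by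
    unfold GDH.denom
    rw [hA]
    push_cast
    ring
  have hdlpos : 0 < GDH.denom r J l := by rw [hdenl]; positivity
  -- the target family, as a Finset
  set 𝒯 : Finset (Finset (Fin n)) := Finset.univ.filter (fun S => S.card = k ∧
      ∃ f : Fin k → Fin n, Function.Injective f ∧ (∀ i, f i ∈ S) ∧
        ∀ a ∈ F.E, (fun i => f (a i)) ∈ G.E) with h𝒯
  have hsetT : ({S : Finset (Fin n) | S.card = k ∧ ∃ f : Fin k → Fin n,
      Function.Injective f ∧ (∀ i, f i ∈ S) ∧
      ∀ a ∈ F.E, (fun i => f (a i)) ∈ G.E} : Set (Finset (Fin n))) = ↑𝒯 := by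
    ext S
    simp [h𝒯]
  rw [hsetT, Set.ncard_coe_finset]
  set P : Finset (Finset (Fin n)) := Finset.powersetCard l (Finset.univ : Finset (Fin n)) with hP
  set g : Finset (Fin n) → ℕ := fun S => (G.E.filter (fun a => ∀ i, a i ∈ S)).card with hg
  -- Key per-S fact
  have key : ∀ S ∈ P, g S ≤ l ^ r ∧ ((πF + ε / 2) * A ≤ (g S : ℝ) →
      ∃ T : Finset (Fin n), T ⊆ S ∧ T ∈ 𝒯) := by
    intro S hSP
    rw [hP, Finset.mem_powersetCard] at hSP
    obtain ⟨-, hScard⟩ := hSP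
    set e := S.orderIsoOfFin hScard with he
    set f₀ : Fin l → Fin n := fun i => (e i : Fin n) with hf₀def
    have hf₀ : Function.Injective f₀ := fun i j hij => e.injective (Subtype.ext hij)
    set H : GDH r J (Fin l) := G.induce f₀ hf₀ with hH
    have hcard : H.E.card = g S := by
      apply Finset.card_bij (fun a _ => fun i => f₀ (a i))
      · intro a ha
        simp only [hH, GDH.induce, Finset.mem_filter, Finset.mem_univ, true_and] at ha
        simp only [hg, Finset.mem_filter]
        exact ⟨ha, fun i => (e (a i)).2⟩
      · intro a ha b hb hab
        funext i
        exact hf₀ (congrFun hab i)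
      · intro b hb
        simp only [hg, Finset.mem_filter] at hb
        refine ⟨fun i => e.symm ⟨b i, hb.2 i⟩, ?_, ?_⟩
        · simp only [hH, GDH.induce, Finset.mem_filter, Finset.mem_univ, true_and]
          have : (fun i => f₀ (e.symm ⟨b i, hb.2 i⟩)) = b := by
            funext i
            simp [hf₀def]
          rw [this]
          exact hb.1
        · funext i
          simp [hf₀def]
    constructor
    · rw [← hcard]
      have := Finset.card_le_univ H.E
      rwa [Fintype.card_fun, Fintype.card_fin, Fintype.card_fin] at this
    intro hgood
    have hfree : ¬ H.Free {⟨k, F⟩} := by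
      intro hfr
      have hle : H.edgeCount ≤ GDH.exNum r J l {⟨k, F⟩} := le_csSup (hbdd l) ⟨H, hfr, rfl⟩
      have hEC : H.edgeCount = (g S : ℝ) / (m:ℝ) := by
        unfold GDH.edgeCount
        rw [hcard, hm]
      have hexval : GDH.exNum r J l {⟨k, F⟩}
          = GDH.densitySeq r J {⟨k, F⟩} l * GDH.denom r J l := by
        unfold GDH.densitySeq
        rw [div_mul_cancel₀ _ (ne_of_gt hdlpos)]
      have hup : (πF + ε / 2) * GDH.denom r J l ≤ H.edgeCount := by
        rw [hEC, hdenl, ← mul_div_assoc]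
        gcongr
      have hlt : GDH.densitySeq r J {⟨k, F⟩} l * GDH.denom r J l
          < (πF + ε / 2) * GDH.denom r J l := by
        exact mul_lt_mul_of_pos_right hdl hdlpos
      rw [hexval] at hle
      linarith
    rw [GDH.Free] at hfree
    push_neg at hfree
    obtain ⟨F', hF', hcopy⟩ := hfree
    rw [Set.mem_singleton_iff] at hF'
    subst hF'
    obtain ⟨f', hf'inj, hf'E⟩ := hcopy
    refine ⟨Finset.univ.image (fun i => f₀ (f' i)), ?_, ?_⟩
    · intro x hx
      simp only [Finset.mem_image, Finset.mem_univ, true_and] at hx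
      obtain ⟨i, rfl⟩ := hx
      exact (e (f' i)).2
    · rw [h𝒯, Finset.mem_filter]
      have hinj : Function.Injective (fun i => f₀ (f' i)) := fun i j hij => hf'inj (hf₀ hij)
      refine ⟨Finset.mem_univ _, ?_, fun i => f₀ (f' i), hinj,
        fun i => Finset.mem_image_of_mem _ (Finset.mem_univ i), fun a ha => ?_⟩
      · rw [Finset.card_image_of_injective _ hinj, Finset.card_univ, Fintype.card_fin]
      · have := hf'E a ha
        simp only [hH, GDH.induce, Finset.mem_filter, Finset.mem_univ, true_and] at this
        exact this
  -- the set of dense l-subsets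
  set X : Finset (Finset (Fin n)) := P.filter (fun S => (πF + ε / 2) * A ≤ (g S : ℝ)) with hX
  -- double counting: total edge count over l-subsets
  have hsum : ∑ S ∈ P, g S = G.E.card * (n - r).choose (l - r) := by
    calc ∑ S ∈ P, g S = ∑ S ∈ P, ∑ a ∈ G.E, if (∀ i, a i ∈ S) then 1 else 0 := by
          refine Finset.sum_congr rfl fun S _ => ?_
          simp only [hg]
          rw [Finset.card_filter]
      _ = ∑ a ∈ G.E, ∑ S ∈ P, if (∀ i, a i ∈ S) then 1 else 0 := Finset.sum_comm
      _ = ∑ a ∈ G.E, (P.filter (fun S => ∀ i, a i ∈ S)).card := by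
          refine Finset.sum_congr rfl fun a _ => ?_
          rw [Finset.card_filter]
      _ = ∑ a ∈ G.E, (n - r).choose (l - r) := by
          refine Finset.sum_congr rfl fun a ha => ?_
          have h1 : P.filter (fun S => ∀ i, a i ∈ S)
              = P.filter (fun S => (Finset.univ.image a) ⊆ S) := by
            ext S
            simp [Finset.image_subset_iff]
          rw [h1]
          have hTc : (Finset.univ.image a).card = r := by
            rw [Finset.card_image_of_injective _ (G.inj a ha), Finset.card_univ,
              Fintype.card_fin]
          have := card_supersets (Finset.univ.image a) hTc hrl
          rwa [Fintype.card_fin] at this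
      _ = G.E.card * (n - r).choose (l - r) := by
          rw [Finset.sum_const, smul_eq_mul]
  -- density hypothesis in edge-count form
  have hdenn : GDH.denom r J n = ((r.factorial * n.choose r : ℕ) : ℝ) / (m:ℝ) := by
    unfold GDH.denom
    push_cast
    ring
  have hdnpos : 0 < GDH.denom r J n := by
    rw [hdenn]
    have : 0 < r.factorial * n.choose r := Nat.mul_pos r.factorial_pos (Nat.choose_pos hrn)
    have h2 : (0:ℝ) < ((r.factorial * n.choose r : ℕ):ℝ) := by exact_mod_cast this
    positivity
  have hE1 : (πF + ε) * ((r.factorial * n.choose r : ℕ) : ℝ) ≤ (G.E.card : ℝ) := by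
    have h0 : (πF + ε) * GDH.denom r J n ≤ G.edgeCount := by
      unfold GDH.density at hden
      rw [Fintype.card_fin] at hden
      exact (le_div_iff₀ hdnpos).mp hden
    unfold GDH.edgeCount at h0
    rw [← hm, hdenn, ← mul_div_assoc] at h0
    exact (div_le_div_iff_of_pos_right hmR).mp h0
  -- averaging
  have hPcard : P.card = n.choose l := by
    rw [hP, Finset.card_powersetCard, Finset.card_univ, Fintype.card_fin]
  have hsumR : ∑ S ∈ P, (g S : ℝ) = (G.E.card : ℝ) * (((n - r).choose (l - r) : ℕ) : ℝ) := by
    exact_mod_cast hsum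
  have hlow : (πF + ε) * A * ((n.choose l : ℕ) : ℝ) ≤ ∑ S ∈ P, (g S : ℝ) := by
    rw [hsumR]
    have h2 : (πF + ε) * ((r.factorial * n.choose r : ℕ) : ℝ) * (((n - r).choose (l - r) : ℕ) : ℝ)
        ≤ (G.E.card : ℝ) * (((n - r).choose (l - r) : ℕ) : ℝ) :=
      mul_le_mul_of_nonneg_right hE1 (by positivity)
    refine le_trans (le_of_eq ?_) h2
    have hid : (n.choose l) * (l.choose r) = (n.choose r) * ((n - r).choose (l - r)) :=
      Nat.choose_mul hrl
    have hidR : ((n.choose l : ℕ) : ℝ) * ((l.choose r : ℕ) : ℝ)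
        = ((n.choose r : ℕ) : ℝ) * (((n - r).choose (l - r) : ℕ) : ℝ) := by exact_mod_cast hid
    rw [hA]
    push_cast
    push_cast at hidR
    linear_combination ((πF + ε) * (r.factorial : ℝ)) * hidR
  have hθ0 : 0 ≤ (πF + ε / 2) * A := mul_nonneg (by linarith) hApos.le
  have hhigh : ∑ S ∈ P, (g S : ℝ) ≤ (X.card : ℝ) * B + (πF + ε / 2) * A * (P.card : ℝ) := by
    rw [← Finset.sum_filter_add_sum_filter_not P (fun S => (πF + ε / 2) * A ≤ (g S : ℝ))]
    have h1 : ∑ S ∈ X, (g S : ℝ) ≤ (X.card : ℝ) * B := by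
      have h := Finset.sum_le_card_nsmul X (fun S => (g S : ℝ)) B ?_
      · rwa [nsmul_eq_mul] at h
      · intro S hSX
        rw [hX, Finset.mem_filter] at hSX
        have := (key S hSX.1).1
        rw [hB]
        show (g S : ℝ) ≤ ((l ^ r : ℕ) : ℝ)
        exact_mod_cast this
    have h2 : ∑ S ∈ P.filter (fun S => ¬ ((πF + ε / 2) * A ≤ (g S : ℝ))), (g S : ℝ)
        ≤ (πF + ε / 2) * A * (P.card : ℝ) := by
      calc ∑ S ∈ P.filter (fun S => ¬ ((πF + ε / 2) * A ≤ (g S : ℝ))), (g S : ℝ)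
          ≤ ((P.filter (fun S => ¬ ((πF + ε / 2) * A ≤ (g S : ℝ)))).card : ℝ)
            * ((πF + ε / 2) * A) := by
            have h := Finset.sum_le_card_nsmul
              (P.filter (fun S => ¬ ((πF + ε / 2) * A ≤ (g S : ℝ))))
              (fun S => (g S : ℝ)) ((πF + ε / 2) * A) ?_
            · rwa [nsmul_eq_mul] at h
            · intro S hS
              rw [Finset.mem_filter] at hS
              exact le_of_not_ge hS.2
        _ ≤ (πF + ε / 2) * A * (P.card : ℝ) := by
            rw [mul_comm]
            apply mul_le_mul_of_nonneg_left _ hθ0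
            exact_mod_cast Finset.card_le_card (Finset.filter_subset _ _)
    have hXeq : P.filter (fun S => (πF + ε / 2) * A ≤ (g S : ℝ)) = X := hX.symm
    rw [hXeq]
    linarith [h1, h2]
  have hXlow : (ε / 2) * A * ((n.choose l : ℕ) : ℝ) ≤ (X.card : ℝ) * B := by
    rw [hPcard] at hhigh
    linarith [hlow, hhigh]
  -- each dense l-set contains a good k-set
  set φ : Finset (Fin n) → Finset (Fin n) := fun S =>
    if h : ∃ T : Finset (Fin n), T ⊆ S ∧ T ∈ 𝒯 then h.choose else ∅ with hφdef
  have hφ : ∀ S ∈ X, φ S ∈ 𝒯 ∧ φ S ⊆ S := by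
    intro S hSX
    rw [hX, Finset.mem_filter] at hSX
    obtain ⟨T, hTS, hT⟩ := (key S hSX.1).2 hSX.2
    have hex : ∃ T : Finset (Fin n), T ⊆ S ∧ T ∈ 𝒯 := ⟨T, hTS, hT⟩
    simp only [hφdef, dif_pos hex]
    exact ⟨hex.choose_spec.2, hex.choose_spec.1⟩
  have hXcount : X.card ≤ 𝒯.card * ((n - k).choose (l - k)) := by
    rw [Finset.card_eq_sum_card_fiberwise (fun S hS => (hφ S hS).1)]
    calc ∑ T ∈ 𝒯, (X.filter (fun S => φ S = T)).card
        ≤ ∑ _T ∈ 𝒯, (n - k).choose (l - k) := by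
          refine Finset.sum_le_sum fun T hT => ?_
          have hTcard : T.card = k := by
            rw [h𝒯, Finset.mem_filter] at hT
            exact hT.2.1
          have hcs := card_supersets T hTcard hkl
          rw [Fintype.card_fin] at hcs
          rw [← hcs]
          apply Finset.card_le_card
          intro S hS
          rw [Finset.mem_filter] at hS ⊢
          have hSX := hS.1
          have hSP : S ∈ P := by
            rw [hX] at hSX
            exact (Finset.mem_filter.mp hSX).1
          refine ⟨hSP, ?_⟩
          rw [← hS.2]
          exact (hφ S hSX).2
      _ = 𝒯.card * ((n - k).choose (l - k)) := by
          rw [Finset.sum_const, smul_eq_mul]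
  have hC : (0:ℝ) < (((n - k).choose (l - k) : ℕ) : ℝ) := by
    have hle : l - k ≤ n - k := by omega
    exact_mod_cast Nat.choose_pos hle
  have hXT : (X.card : ℝ) ≤ (𝒯.card : ℝ) * (((n - k).choose (l - k) : ℕ) : ℝ) := by
    exact_mod_cast hXcount
  rw [div_mul_eq_mul_div, div_le_iff₀ (by positivity)]
  have hid2 : (n.choose k) * ((n - k).choose (l - k)) = (n.choose l) * (l.choose k) :=
    (Nat.choose_mul hkl).symm
  have hid2R : ((n.choose k : ℕ) : ℝ) * (((n - k).choose (l - k) : ℕ) : ℝ)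
      = ((n.choose l : ℕ) : ℝ) * ((l.choose k : ℕ) : ℝ) := by exact_mod_cast hid2
  rw [← mul_le_mul_iff_left₀ hC]
  calc ε * A * ((n.choose k : ℕ) : ℝ) * (((n - k).choose (l - k) : ℕ) : ℝ)
      = 2 * ((l.choose k : ℕ) : ℝ) * ((ε / 2) * A * ((n.choose l : ℕ) : ℝ)) := by
        linear_combination (ε * A) * hid2R
    _ ≤ 2 * ((l.choose k : ℕ) : ℝ) * ((X.card : ℝ) * B) := by
        apply mul_le_mul_of_nonneg_left hXlow (by positivity)
    _ ≤ 2 * ((l.choose k : ℕ) : ℝ) * (((𝒯.card : ℝ) * (((n - k).choose (l - k) : ℕ) : ℝ)) * B) := by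
        apply mul_le_mul_of_nonneg_left _ (by positivity)
        exact mul_le_mul_of_nonneg_right hXT hBpos.le
    _ = (𝒯.card : ℝ) * (2 * B * ((l.choose k : ℕ) : ℝ)) * (((n - k).choose (l - k) : ℕ) : ℝ) := by
        ring
end

section
/- Let F be a GDH of type J on k vertices and let t = (t_1,…,t_k) be a k-tuple of positive integers. Then the Turán density of the t-blowup equals that of F: π(F) = π(F(t)). -/
open Finset Filter

namespace BlowupAux
open Finset
open scoped Classical

noncomputable def injF (j n : ℕ) : Finset (Fin j → Fin n) :=
  Finset.univ.filter Function.Injective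

lemma mem_injF {j n : ℕ} {f : Fin j → Fin n} : f ∈ injF j n ↔ Function.Injective f := by
  simp [injF]

lemma card_injF (j n : ℕ) : (injF j n).card = n.descFactorial j := by
  have h1 : Fintype.card {f : Fin j → Fin n // Function.Injective f} = (injF j n).card := by
    rw [Fintype.card_subtype]; congr 1
  rw [← h1, Fintype.card_congr (Equiv.subtypeInjectiveEquivEmbedding (Fin j) (Fin n)),
    Fintype.card_embedding_eq, Fintype.card_fin, Fintype.card_fin]

lemma injF_pos {j n : ℕ} (h : j ≤ n) : 0 < (injF j n).card := by
  rw [card_injF]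
  exact Nat.pos_of_ne_zero (fun h0 => absurd (Nat.descFactorial_eq_zero_iff_lt.mp h0) (not_lt.mpr h))


noncomputable def pairCount (j l n : ℕ) (a : Fin j → Fin n) : ℕ :=
  (Finset.univ.filter (fun gc : (Fin l ↪ Fin n) × (Fin j → Fin l) =>
    (fun i => gc.1 (gc.2 i)) = a)).card


lemma exists_perm {j n : ℕ} {a a' : Fin j → Fin n} (ha : Function.Injective a)
    (ha' : Function.Injective a') : ∃ σ : Equiv.Perm (Fin n), ∀ i, σ (a i) = a' i := by
  classical
  set p : Fin n → Prop := fun x => x ∈ Set.range a with hp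
  set p' : Fin n → Prop := fun x => x ∈ Set.range a' with hp'
  have hcard : Fintype.card {x // ¬ p x} = Fintype.card {x // ¬ p' x} := by
    rw [Fintype.card_subtype_compl, Fintype.card_subtype_compl]
    congr 1
    exact (Set.card_range_of_injective ha).trans (Set.card_range_of_injective ha').symm
  refine ⟨(Equiv.sumCompl p).symm.trans
    ((((Equiv.ofInjective a ha).symm.trans (Equiv.ofInjective a' ha')).sumCongr
      (Fintype.equivOfCardEq hcard)).trans (Equiv.sumCompl p')), fun i => ?_⟩
  have h0 : (Equiv.sumCompl p).symm (a i) = Sum.inl ⟨a i, ⟨i, rfl⟩⟩ :=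
    Equiv.sumCompl_symm_apply_of_pos (p := p) (a := a i) ⟨i, rfl⟩
  simp only [Equiv.trans_apply, h0, Equiv.sumCongr_apply, Sum.map_inl, Equiv.sumCompl_apply_inl]
  have h2 : (⟨a i, ⟨i, rfl⟩⟩ : {x // p x}) = Equiv.ofInjective a ha i := by
    rw [Equiv.ofInjective_apply]
  rw [h2, Equiv.symm_apply_apply, Equiv.ofInjective_apply]

lemma pairCount_uniform {j l n : ℕ} {a a' : Fin j → Fin n} (ha : Function.Injective a)
    (ha' : Function.Injective a') : pairCount j l n a = pairCount j l n a' := by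
  classical
  obtain ⟨σ, hσ⟩ := exists_perm ha ha'
  unfold pairCount
  apply Finset.card_nbij' (fun gc => (gc.1.trans σ.toEmbedding, gc.2))
    (fun gc => (gc.1.trans σ.symm.toEmbedding, gc.2))
  · intro gc hgc
    simp only [Finset.mem_coe, Finset.mem_filter, Finset.mem_univ, true_and] at hgc ⊢
    funext i
    simp only [Function.Embedding.trans_apply, Equiv.coe_toEmbedding]
    rw [show gc.1 (gc.2 i) = a i from congrFun hgc i]
    exact hσ i
  · intro gc hgc
    simp only [Finset.mem_coe, Finset.mem_filter, Finset.mem_univ, true_and] at hgc ⊢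
    funext i
    simp only [Function.Embedding.trans_apply, Equiv.coe_toEmbedding]
    rw [show gc.1 (gc.2 i) = a' i from congrFun hgc i, ← hσ i, Equiv.symm_apply_apply]
  · intro gc _
    refine Prod.ext ?_ rfl
    ext x
    simp
  · intro gc _
    refine Prod.ext ?_ rfl
    ext x
    simp

lemma pairCount_total (j l n : ℕ) :
    ∑ a ∈ injF j n, pairCount j l n a = Fintype.card (Fin l ↪ Fin n) * (injF j l).card := by
  classical
  set Q : Finset ((Fin l ↪ Fin n) × (Fin j → Fin l)) :=
    Finset.univ.filter (fun gc => Function.Injective (fun i => gc.1 (gc.2 i))) with hQ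
  have h1 : Q.card = ∑ a ∈ injF j n, pairCount j l n a := by
    rw [Finset.card_eq_sum_card_fiberwise
      (f := fun gc : (Fin l ↪ Fin n) × (Fin j → Fin l) => (fun i => gc.1 (gc.2 i)))
      (t := injF j n) (fun gc hgc => mem_injF.mpr ((Finset.mem_filter.mp hgc).2))]
    refine Finset.sum_congr rfl (fun a ha => ?_)
    unfold pairCount
    congr 1
    ext gc
    simp only [hQ, Finset.mem_filter, Finset.mem_univ, true_and]
    constructor
    · rintro ⟨-, h⟩; exact h
    · intro h; exact ⟨by rw [h]; exact mem_injF.mp ha, h⟩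
  have h2 : Q.card = Fintype.card (Fin l ↪ Fin n) * (injF j l).card := by
    rw [hQ, Finset.card_filter, Fintype.sum_prod_type]
    have : ∀ g : Fin l ↪ Fin n,
        (∑ c : Fin j → Fin l, if Function.Injective (fun i => g (c i)) then 1 else 0)
          = (injF j l).card := by
      intro g
      rw [← Finset.card_filter]
      congr 1
      ext c
      simp only [Finset.mem_filter, Finset.mem_univ, true_and, mem_injF]
      constructor
      · intro h; exact fun x y hxy => h (by simp [hxy])
      · intro h; exact (g.injective.comp h)
    rw [Finset.sum_congr rfl (fun g _ => this g), Finset.sum_const, Finset.card_univ,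
      smul_eq_mul]
  rw [← h1, h2]


set_option maxHeartbeats 1000000 in
lemma exists_box (T : ℕ) : ∀ (k : ℕ) (c : ℝ), 0 < c →
    ∃ n₁ : ℕ, ∀ n, n₁ ≤ n → ∀ A : Finset (Fin k → Fin n),
      c * (n : ℝ) ^ k ≤ A.card →
      ∃ S : Fin k → Finset (Fin n), (∀ v, T ≤ (S v).card) ∧
        ∀ w : Fin k → Fin n, (∀ v, w v ∈ S v) → w ∈ A := by
  intro k
  induction k with
  | zero =>
    intro c hc
    refine ⟨1, fun n hn A hA => ?_⟩
    have hA0 : A.Nonempty := by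
      rw [← Finset.card_pos, ← Nat.cast_pos (α := ℝ)]
      calc (0:ℝ) < c := hc
        _ = c * (n:ℝ)^0 := by ring
        _ ≤ A.card := hA
    obtain ⟨a, haA⟩ := hA0
    refine ⟨fun v => v.elim0, fun v => v.elim0, fun w _ => ?_⟩
    have : w = a := funext fun x => x.elim0
    rwa [this]
  | succ k ih =>
    intro c hc
    by_cases hc1 : c ≤ 1
    case neg =>
      refine ⟨1, fun n hn A hA => absurd hA (not_le.mpr ?_)⟩
      have hcu : (Finset.univ : Finset (Fin (k+1) → Fin n)).card = n^(k+1) := by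
        simp [Finset.card_univ]
      have hcard : (A.card : ℝ) ≤ (n:ℝ)^(k+1) := by
        calc (A.card : ℝ) ≤ ((Finset.univ : Finset (Fin (k+1) → Fin n)).card : ℝ) := by
              exact_mod_cast Finset.card_le_card (Finset.subset_univ A)
          _ = (n:ℝ)^(k+1) := by rw [hcu]; push_cast; ring
      have hpow : (0:ℝ) < (n:ℝ)^(k+1) := by
        have : (1:ℝ) ≤ (n:ℝ) := by exact_mod_cast hn
        positivity
      calc (A.card : ℝ) ≤ (n:ℝ)^(k+1) := hcard
        _ = 1 * (n:ℝ)^(k+1) := by ring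
        _ < c * (n:ℝ)^(k+1) := mul_lt_mul_of_pos_right (not_le.mp hc1) hpow
    case pos =>
    classical
    set c' : ℝ := (c/4) * (c/4)^T with hc'def
    have hc'0 : 0 < c' := by positivity
    obtain ⟨n₂, hbox⟩ := ih c' hc'0
    obtain ⟨n₃, hn₃⟩ := exists_nat_ge (4 / c)
    obtain ⟨n₄, hn₄⟩ := exists_nat_ge ((4 * T) / c)
    refine ⟨max (max n₂ n₃) (max n₄ 1), fun n hn A hA => ?_⟩
    have hn2 : n₂ ≤ n := le_trans (le_trans (le_max_left _ _) (le_max_left _ _)) hn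
    have hn0 : 0 < n := le_trans (le_trans (le_max_right _ _) (le_max_right _ _)) hn
    have hn0R : (0:ℝ) < n := by exact_mod_cast hn0
    have hcn4 : 4 ≤ c * n := by
      have : (4:ℝ)/c ≤ n :=
        le_trans hn₃ (by exact_mod_cast le_trans (le_trans (le_max_right _ _) (le_max_left _ _)) hn)
      calc (4:ℝ) = (4/c) * c := by field_simp
        _ ≤ (n:ℝ) * c := mul_le_mul_of_nonneg_right this (le_of_lt hc)
        _ = c * n := by ring
    have hTcn : (T:ℝ) ≤ (c/4) * n := by
      have h4 : (4*T:ℝ)/c ≤ n :=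
        le_trans hn₄ (by exact_mod_cast le_trans (le_trans (le_max_left _ _) (le_max_right _ _)) hn)
      have := mul_le_mul_of_nonneg_right h4 (le_of_lt (show (0:ℝ) < c/4 by positivity))
      calc (T:ℝ) = (4*(T:ℝ)/c) * (c/4) := by field_simp
        _ ≤ (n:ℝ) * (c/4) := this
        _ = (c/4) * n := by ring
    set N : (Fin k → Fin n) → Finset (Fin n) :=
      fun p => Finset.univ.filter (fun x => Fin.snoc p x ∈ A) with hN
    have hsum : ∑ p : Fin k → Fin n, (N p).card = A.card := by
      rw [eq_comm, Finset.card_eq_sum_card_fiberwise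
        (f := fun w => Fin.init w) (t := Finset.univ) (fun w _ => Finset.mem_univ _)]
      refine Finset.sum_congr rfl (fun p _ => ?_)
      apply Finset.card_nbij' (fun w => w (Fin.last k)) (fun x => Fin.snoc p x)
      · intro w hw
        simp only [Finset.mem_coe, Finset.mem_filter] at hw
        simp only [Finset.mem_coe, hN, Finset.mem_filter, Finset.mem_univ, true_and]
        rw [← hw.2, Fin.snoc_init_self]
        exact hw.1
      · intro x hx
        simp only [Finset.mem_coe, hN, Finset.mem_filter, Finset.mem_univ, true_and] at hx
        simp only [Finset.mem_coe, Finset.mem_filter]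
        exact ⟨hx, Fin.init_snoc _ _⟩
      · intro w hw
        simp only [Finset.mem_coe, Finset.mem_filter] at hw
        rw [← hw.2]; exact Fin.snoc_init_self w
      · intro x hx
        simp only [Fin.snoc_last]
    set M : ℕ := ⌈(c/2) * n⌉₊ with hM
    have hMlb : (c/2) * n ≤ (M:ℝ) := Nat.le_ceil _
    have hMub : (M:ℝ) < (c/2)*n + 1 := Nat.ceil_lt_add_one (by positivity)
    set B : Finset (Fin k → Fin n) := Finset.univ.filter (fun p => M ≤ (N p).card) with hB
    have hBcard : (c/4) * (n:ℝ)^k ≤ B.card := by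
      have hsplit : ∑ p ∈ B, (N p).card + ∑ p ∈ Finset.univ.filter (fun p => ¬ (M ≤ (N p).card)), (N p).card
          = ∑ p : Fin k → Fin n, (N p).card := Finset.sum_filter_add_sum_filter_not _ _ _
      have h1 : ∑ p ∈ B, (N p).card ≤ B.card * n := by
        apply Finset.sum_le_card_nsmul
        intro p _
        calc (N p).card ≤ (Finset.univ : Finset (Fin n)).card := Finset.card_le_card (Finset.subset_univ _)
          _ = n := by simp
      have h2 : ∑ p ∈ Finset.univ.filter (fun p => ¬ (M ≤ (N p).card)), (N p).card ≤ n^k * M := by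
        calc ∑ p ∈ Finset.univ.filter (fun p => ¬ (M ≤ (N p).card)), (N p).card
            ≤ ∑ _p ∈ Finset.univ.filter (fun p => ¬ (M ≤ (N p).card)), M := by
              apply Finset.sum_le_sum
              intro p hp
              simp only [Finset.mem_filter, not_le] at hp
              exact le_of_lt hp.2
          _ = (Finset.univ.filter (fun p => ¬ (M ≤ (N p).card))).card * M := by
              rw [Finset.sum_const, smul_eq_mul]
          _ ≤ n^k * M := by
              apply Nat.mul_le_mul_right
              calc _ ≤ (Finset.univ : Finset (Fin k → Fin n)).card := Finset.card_le_card (Finset.subset_univ _)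
                _ = n^k := by simp [Finset.card_univ]
      have hAcast : c * (n:ℝ)^(k+1) ≤ (B.card : ℝ) * n + (n:ℝ)^k * M := by
        calc c * (n:ℝ)^(k+1) ≤ (A.card : ℝ) := hA
          _ = ((∑ p : Fin k → Fin n, (N p).card : ℕ) : ℝ) := by rw [hsum]
          _ = ((∑ p ∈ B, (N p).card + ∑ p ∈ Finset.univ.filter (fun p => ¬ (M ≤ (N p).card)), (N p).card : ℕ) : ℝ) := by rw [hsplit]
          _ ≤ ((B.card * n + n^k * M : ℕ) : ℝ) := by
              exact_mod_cast Nat.add_le_add h1 h2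
          _ = (B.card : ℝ) * n + (n:ℝ)^k * M := by push_cast; ring
      have hstep : c * (n:ℝ)^(k+1) ≤ (B.card:ℝ) * n + (n:ℝ)^k * ((c/2)*n + 1) := by
        refine le_trans hAcast ?_
        have : (n:ℝ)^k * (M:ℝ) ≤ (n:ℝ)^k * ((c/2)*n+1) :=
          mul_le_mul_of_nonneg_left (le_of_lt hMub) (by positivity)
        linarith
      have hnk : (n:ℝ)^k * 1 ≤ (n:ℝ)^k * ((c/4) * n) := by
        apply mul_le_mul_of_nonneg_left _ (by positivity)
        linarith
      have hfin : (c/4) * (n:ℝ)^(k+1) ≤ (B.card:ℝ) * n := by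
        have hexp : (n:ℝ)^(k+1) = (n:ℝ)^k * n := by ring
        nlinarith [hstep, hnk]
      apply le_of_mul_le_mul_right _ hn0R
      calc (c/4) * (n:ℝ)^k * n = (c/4) * (n:ℝ)^(k+1) := by ring
        _ ≤ (B.card:ℝ) * n := hfin
    -- T ≤ n
    have hTn : T ≤ n := by
      have : (T:ℝ) ≤ (n:ℝ) := by
        refine le_trans hTcn ?_
        nlinarith
      exact_mod_cast this
    -- double counting over T-subsets
    have hdouble : ∑ S ∈ Finset.powersetCard T (Finset.univ : Finset (Fin n)),
        (B.filter (fun p => S ⊆ N p)).card = ∑ p ∈ B, ((N p).card).choose T := by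
      have h1 : ∀ S, (B.filter (fun p => S ⊆ N p)).card = ∑ p ∈ B, if S ⊆ N p then 1 else 0 := by
        intro S; rw [Finset.card_filter]
      have h2 : ∀ p, (Finset.powersetCard T (N p)).card
          = ∑ S ∈ Finset.powersetCard T (Finset.univ : Finset (Fin n)), if S ⊆ N p then 1 else 0 := by
        intro p
        rw [← Finset.card_filter]
        congr 1
        ext S
        simp only [Finset.mem_filter, Finset.mem_powersetCard, Finset.subset_univ, true_and]
        tauto
      calc ∑ S ∈ Finset.powersetCard T (Finset.univ : Finset (Fin n)),
            (B.filter (fun p => S ⊆ N p)).card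
          = ∑ S ∈ Finset.powersetCard T (Finset.univ : Finset (Fin n)), ∑ p ∈ B, if S ⊆ N p then 1 else 0 := by
            exact Finset.sum_congr rfl (fun S _ => h1 S)
        _ = ∑ p ∈ B, ∑ S ∈ Finset.powersetCard T (Finset.univ : Finset (Fin n)), if S ⊆ N p then 1 else 0 :=
            Finset.sum_comm
        _ = ∑ p ∈ B, (Finset.powersetCard T (N p)).card :=
            Finset.sum_congr rfl (fun p _ => (h2 p).symm)
        _ = ∑ p ∈ B, ((N p).card).choose T :=
            Finset.sum_congr rfl (fun p _ => Finset.card_powersetCard _ _)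
    have hlower : (B.card : ℝ) * (M.choose T) ≤ ∑ S ∈ Finset.powersetCard T (Finset.univ : Finset (Fin n)),
        ((B.filter (fun p => S ⊆ N p)).card : ℝ) := by
      have : ∀ p ∈ B, (M.choose T : ℝ) ≤ (((N p).card).choose T : ℝ) := by
        intro p hp
        simp only [hB, Finset.mem_filter] at hp
        exact_mod_cast Nat.choose_le_choose T hp.2
      calc (B.card : ℝ) * (M.choose T) = ∑ _p ∈ B, (M.choose T : ℝ) := by
            rw [Finset.sum_const, nsmul_eq_mul]
        _ ≤ ∑ p ∈ B, (((N p).card).choose T : ℝ) := Finset.sum_le_sum this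
        _ = ((∑ p ∈ B, ((N p).card).choose T : ℕ) : ℝ) := by push_cast; rfl
        _ = ((∑ S ∈ Finset.powersetCard T (Finset.univ : Finset (Fin n)),
            (B.filter (fun p => S ⊆ N p)).card : ℕ) : ℝ) := by rw [hdouble]
        _ = _ := by push_cast; rfl
    -- choose a popular S₀
    have hpcard : (Finset.powersetCard T (Finset.univ : Finset (Fin n))).card = n.choose T := by
      rw [Finset.card_powersetCard, Finset.card_univ, Fintype.card_fin]
    have hchoosePos : (0:ℝ) < (n.choose T : ℝ) := by
      exact_mod_cast Nat.choose_pos hTn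
    have hex : ∃ S₀ ∈ Finset.powersetCard T (Finset.univ : Finset (Fin n)),
        (B.card : ℝ) * (M.choose T) / (n.choose T) ≤ ((B.filter (fun p => S₀ ⊆ N p)).card : ℝ) := by
      by_contra hcon
      push_neg at hcon
      have hne : (Finset.powersetCard T (Finset.univ : Finset (Fin n))).Nonempty := by
        rw [Finset.powersetCard_nonempty]
        simpa using hTn
      have := Finset.sum_lt_sum_of_nonempty hne hcon
      rw [Finset.sum_const, nsmul_eq_mul, hpcard] at this
      rw [mul_div_assoc] at this
      have h3 : (n.choose T : ℝ) * ((B.card:ℝ) * ((M.choose T : ℝ) / (n.choose T:ℝ))) 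
          = (B.card:ℝ) * (M.choose T) := by
        field_simp
      -- contradiction with hlower
      nlinarith [hlower]
    obtain ⟨S₀, hS₀mem, hS₀⟩ := hex
    set B' := B.filter (fun p => S₀ ⊆ N p) with hB'
    have hfac : (0:ℝ) < (T.factorial : ℝ) := by exact_mod_cast T.factorial_pos
    have hTM : T ≤ M := by
      have hcn0 : (0:ℝ) ≤ c * (n:ℝ) := by positivity
      have : (T:ℝ) ≤ (M:ℝ) := by linarith
      exact_mod_cast this
    have hnT : (n.choose T : ℝ) * (T.factorial:ℝ) ≤ (n:ℝ)^T := by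
      have h1 := Nat.descFactorial_le_pow n T
      rw [Nat.descFactorial_eq_factorial_mul_choose] at h1
      calc (n.choose T : ℝ) * (T.factorial:ℝ) = ((T.factorial * n.choose T : ℕ) : ℝ) := by
            push_cast; ring
        _ ≤ ((n^T : ℕ):ℝ) := by exact_mod_cast h1
        _ = (n:ℝ)^T := by push_cast; rfl
    have hMT : ((c/4)*(n:ℝ))^T ≤ (M.choose T : ℝ) * (T.factorial:ℝ) := by
      have h1 := Nat.pow_sub_le_descFactorial M T
      rw [Nat.descFactorial_eq_factorial_mul_choose] at h1
      have hcast : ((M+1-T : ℕ):ℝ) = (M:ℝ)+1-(T:ℝ) := by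
        rw [Nat.cast_sub (by omega)]
        push_cast; ring
      have h2 : (c/4)*(n:ℝ) ≤ ((M+1-T : ℕ):ℝ) := by
        rw [hcast]; linarith
      calc ((c/4)*(n:ℝ))^T ≤ (((M+1-T:ℕ)):ℝ)^T :=
            pow_le_pow_left₀ (by positivity) h2 T
        _ = (((M+1-T:ℕ)^T : ℕ):ℝ) := by push_cast; rfl
        _ ≤ ((T.factorial * M.choose T : ℕ):ℝ) := by exact_mod_cast h1
        _ = (M.choose T : ℝ) * (T.factorial:ℝ) := by push_cast; ring
    have key : c' * (n:ℝ)^k * (n.choose T:ℝ) ≤ (B.card:ℝ) * (M.choose T:ℝ) := by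
      apply le_of_mul_le_mul_right _ hfac
      calc c' * (n:ℝ)^k * (n.choose T:ℝ) * (T.factorial:ℝ)
          = ((c/4) * (n:ℝ)^k) * ((c/4)^T * ((n.choose T:ℝ) * (T.factorial:ℝ))) := by
            rw [hc'def]; ring
        _ ≤ ((c/4) * (n:ℝ)^k) * ((c/4)^T * (n:ℝ)^T) := by
            apply mul_le_mul_of_nonneg_left _ (by positivity)
            apply mul_le_mul_of_nonneg_left hnT (by positivity)
        _ = ((c/4) * (n:ℝ)^k) * (((c/4)*(n:ℝ))^T) := by rw [mul_pow]
        _ ≤ ((c/4) * (n:ℝ)^k) * ((M.choose T:ℝ) * (T.factorial:ℝ)) :=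
            mul_le_mul_of_nonneg_left hMT (by positivity)
        _ ≤ (B.card:ℝ) * ((M.choose T:ℝ) * (T.factorial:ℝ)) := by
            apply mul_le_mul_of_nonneg_right hBcard (by positivity)
        _ = (B.card:ℝ) * (M.choose T:ℝ) * (T.factorial:ℝ) := by ring
    have hB'c : c' * (n:ℝ)^k ≤ (B'.card : ℝ) := by
      have h1 : c' * (n:ℝ)^k ≤ (B.card:ℝ) * (M.choose T:ℝ) / (n.choose T:ℝ) := by
        rw [le_div_iff₀ hchoosePos]
        exact key
      exact le_trans h1 hS₀
    obtain ⟨S', hS'card, hS'trans⟩ := hbox n hn2 B' hB'c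
    refine ⟨fun v => Fin.lastCases S₀ S' v, ?_, ?_⟩
    · intro v
      induction v using Fin.lastCases with
      | last =>
        simp only [Fin.lastCases_last]
        exact le_of_eq (Finset.mem_powersetCard.mp hS₀mem).2.symm
      | cast i =>
        simp only [Fin.lastCases_castSucc]
        exact hS'card i
    · intro w hw
      have hinit : Fin.init w ∈ B' := by
        apply hS'trans
        intro v
        have := hw v.castSucc
        simp only [Fin.lastCases_castSucc] at this
        exact this
      rw [hB', Finset.mem_filter] at hinit
      have hsub : S₀ ⊆ N (Fin.init w) := hinit.2
      have hwl : w (Fin.last k) ∈ S₀ := by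
        have := hw (Fin.last k)
        simp only [Fin.lastCases_last] at this
        exact this
      have hmem := hsub hwl
      simp only [hN, Finset.mem_filter, Finset.mem_univ, true_and] at hmem
      rwa [Fin.snoc_init_self] at hmem

lemma pairCount_eq {j l n : ℕ} {a : Fin j → Fin n} (ha : Function.Injective a) :
    pairCount j l n a * (injF j n).card = Fintype.card (Fin l ↪ Fin n) * (injF j l).card := by
  have h := pairCount_total j l n
  have h2 : ∑ a' ∈ injF j n, pairCount j l n a' = (injF j n).card * pairCount j l n a := by
    rw [Finset.sum_congr rfl (fun a' ha' => pairCount_uniform (mem_injF.mp ha') ha),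
      Finset.sum_const, smul_eq_mul]
  rw [h2] at h
  rw [mul_comm]
  exact h


section GDHlemmas
variable {r : ℕ} {J : Subgroup (Equiv.Perm (Fin r))}

lemma mJ_pos (J : Subgroup (Equiv.Perm (Fin r))) : 0 < (Nat.card J : ℝ) := by
  have : 0 < Nat.card J := Nat.card_pos
  exact_mod_cast this

lemma edgeCount_le_iff {V : Type} [DecidableEq V] (G : GDH r J V) (y : ℝ) :
    G.edgeCount ≤ y ↔ (G.E.card : ℝ) ≤ y * (Nat.card J : ℝ) :=
  div_le_iff₀ (mJ_pos J)

lemma le_edgeCount_iff {V : Type} [DecidableEq V] (G : GDH r J V) (y : ℝ) :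
    y ≤ G.edgeCount ↔ y * (Nat.card J : ℝ) ≤ (G.E.card : ℝ) :=
  le_div_iff₀ (mJ_pos J)

lemma denom_mul (n : ℕ) : GDH.denom r J n * (Nat.card J : ℝ) = (n.descFactorial r : ℝ) := by
  rw [GDH.denom, Nat.descFactorial_eq_factorial_mul_choose]
  push_cast
  field_simp

lemma E_card_le {n : ℕ} (G : GDH r J (Fin n)) : G.E.card ≤ n.descFactorial r := by
  rw [← card_injF]
  apply Finset.card_le_card
  intro a ha
  exact mem_injF.mpr (G.inj a ha)

lemma denom_nonneg (n : ℕ) : 0 ≤ GDH.denom r J n := by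
  rw [GDH.denom]
  positivity

lemma denom_pos {n : ℕ} (h : r ≤ n) : 0 < GDH.denom r J n := by
  rw [GDH.denom]
  have h1 : 0 < (Nat.factorial r : ℝ) := by exact_mod_cast Nat.factorial_pos r
  have h2 : 0 < (n.choose r : ℝ) := by exact_mod_cast Nat.choose_pos h
  have h3 := mJ_pos J
  positivity

def emptyG (r : ℕ) (J : Subgroup (Equiv.Perm (Fin r))) (V : Type) [DecidableEq V] :
    GDH r J V :=
  ⟨∅, fun a ha => absurd ha (Finset.notMem_empty a), fun a ha => absurd ha (Finset.notMem_empty a)⟩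

lemma emptyG_edgeCount {V : Type} [DecidableEq V] : (emptyG r J V).edgeCount = 0 := by
  simp [emptyG, GDH.edgeCount]

lemma emptyG_free {V : Type} [DecidableEq V] {𝓕 : Set ((k : ℕ) × GDH r J (Fin k))}
    (h : ∀ H ∈ 𝓕, H.2.E.Nonempty) : (emptyG r J V).Free 𝓕 := by
  rintro H hH ⟨f, hf, hhom⟩
  obtain ⟨a, ha⟩ := h H hH
  exact Finset.notMem_empty _ (hhom a ha)

lemma exNum_bddAbove (n : ℕ) (𝓕 : Set ((k : ℕ) × GDH r J (Fin k))) :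
    BddAbove {x : ℝ | ∃ G : GDH r J (Fin n), G.Free 𝓕 ∧ x = G.edgeCount} := by
  refine ⟨(n.descFactorial r : ℝ) / (Nat.card J : ℝ), ?_⟩
  rintro x ⟨G, -, rfl⟩
  rw [GDH.edgeCount]
  gcongr
  exact_mod_cast E_card_le G

lemma le_exNum {n : ℕ} {𝓕 : Set ((k : ℕ) × GDH r J (Fin k))} {G : GDH r J (Fin n)}
    (hG : G.Free 𝓕) : G.edgeCount ≤ GDH.exNum r J n 𝓕 :=
  le_csSup (exNum_bddAbove n 𝓕) ⟨G, hG, rfl⟩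

lemma exNum_le {n : ℕ} {𝓕 : Set ((k : ℕ) × GDH r J (Fin k))} {y : ℝ} (hy : 0 ≤ y)
    (h : ∀ G : GDH r J (Fin n), G.Free 𝓕 → G.edgeCount ≤ y) : GDH.exNum r J n 𝓕 ≤ y :=
  Real.sSup_le (by rintro x ⟨G, hG, rfl⟩; exact h G hG) hy

lemma exNum_nonneg {n : ℕ} {𝓕 : Set ((k : ℕ) × GDH r J (Fin k))}
    (h : ∃ G : GDH r J (Fin n), G.Free 𝓕) : 0 ≤ GDH.exNum r J n 𝓕 := by
  obtain ⟨G, hG⟩ := h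
  refine le_trans ?_ (le_exNum hG)
  rw [GDH.edgeCount]
  positivity

lemma contains_toFin_iff {n : ℕ} (G : GDH r J (Fin n)) {V : Type} [DecidableEq V] [Fintype V]
    (H : GDH r J V) : G.ContainsCopy (H.toFin).2 ↔ G.ContainsCopy H := by
  constructor
  · rintro ⟨f, hf, hhom⟩
    refine ⟨fun v => f (Fintype.equivFin V v), hf.comp (Equiv.injective _), fun a ha => ?_⟩
    exact hhom _ (Finset.mem_image_of_mem _ ha)
  · rintro ⟨f, hf, hhom⟩
    refine ⟨fun v => f ((Fintype.equivFin V).symm v), hf.comp (Equiv.injective _), fun a ha => ?_⟩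
    simp only [GDH.toFin, GDH.relabel, Finset.mem_image] at ha
    obtain ⟨b, hb, rfl⟩ := Finset.mem_image.mp ha
    have := hhom b hb
    simpa using this

end GDHlemmas


section Supersat
variable {r : ℕ} {J : Subgroup (Equiv.Perm (Fin r))}

set_option maxHeartbeats 2000000 in
lemma many_copies {n l k : ℕ} (hrl : r ≤ l) (hkl : k ≤ l) (hln : l ≤ n)
    (hn0 : 0 < n) (hl0 : 0 < l)
    (F : GDH r J (Fin k)) (G : GDH r J (Fin n)) (x δ : ℝ) (hx : 0 ≤ x) (hδ : 0 < δ)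
    (hex : GDH.exNum r J l {⟨k, F⟩} ≤ x * GDH.denom r J l)
    (hG : (x + δ) * GDH.denom r J n ≤ G.edgeCount) :
    ∃ C : Finset (Fin k → Fin n),
      (∀ f ∈ C, Function.Injective f ∧ ∀ a ∈ F.E, (fun i => f (a i)) ∈ G.E) ∧
      δ * (n.descFactorial k : ℝ) ≤ (C.card : ℝ) * (l.descFactorial k : ℝ) := by
  classical
  have hkn : k ≤ n := le_trans hkl hln
  have hrn : r ≤ n := le_trans hrl hln
  -- cast of hypothesis on G
  have hcardE : (x + δ) * (n.descFactorial r : ℝ) ≤ (G.E.card : ℝ) := by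
    rw [le_edgeCount_iff] at hG
    calc (x + δ) * (n.descFactorial r : ℝ) = (x + δ) * GDH.denom r J n * (Nat.card J : ℝ) := by
          rw [mul_assoc, denom_mul]
      _ ≤ (G.E.card : ℝ) := hG
  -- G.E is nonempty
  have hEne : G.E.Nonempty := by
    rw [← Finset.card_pos, ← Nat.cast_pos (α := ℝ)]
    have h1 : 0 < (n.descFactorial r : ℝ) := by
      have := Nat.pos_of_ne_zero (fun h0 => absurd (Nat.descFactorial_eq_zero_iff_lt.mp h0)
        (not_lt.mpr hrn))
      exact_mod_cast this
    nlinarith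
  obtain ⟨a₀, ha₀⟩ := hEne
  -- double counting
  set Q : Finset ((Fin l ↪ Fin n) × (Fin r → Fin l)) :=
    Finset.univ.filter (fun gc => (fun i => gc.1 (gc.2 i)) ∈ G.E) with hQdef
  have h1 : Q.card = ∑ a ∈ G.E, pairCount r l n a := by
    rw [Finset.card_eq_sum_card_fiberwise
      (f := fun gc : (Fin l ↪ Fin n) × (Fin r → Fin l) => (fun i => gc.1 (gc.2 i)))
      (s := Q) (t := G.E) (fun gc hgc => (Finset.mem_filter.mp (Finset.mem_coe.mp hgc)).2)]
    refine Finset.sum_congr rfl (fun a ha => ?_)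
    unfold pairCount
    congr 1
    ext gc
    simp only [hQdef, Finset.mem_filter, Finset.mem_univ, true_and]
    constructor
    · rintro ⟨-, h⟩; exact h
    · intro h; exact ⟨by rw [h]; exact ha, h⟩
  have h2 : Q.card = ∑ g : Fin l ↪ Fin n, ((G.induce g g.injective).E).card := by
    rw [hQdef, Finset.card_filter, Fintype.sum_prod_type]
    refine Finset.sum_congr rfl (fun g _ => ?_)
    rw [← Finset.card_filter]
    rfl
  have huni : ∑ a ∈ G.E, pairCount r l n a = G.E.card * pairCount r l n a₀ := by
    rw [Finset.sum_congr rfl (fun a ha => pairCount_uniform (G.inj a ha) (G.inj a₀ ha₀)),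
      Finset.sum_const, smul_eq_mul]
  -- good embeddings
  set Good : Finset (Fin l ↪ Fin n) :=
    Finset.univ.filter (fun g => (G.induce g g.injective).ContainsCopy F) with hGood
  -- real abbreviations
  set L : ℝ := (Fintype.card (Fin l ↪ Fin n) : ℝ) with hL
  set Rl : ℝ := (l.descFactorial r : ℝ) with hRl
  set Rn : ℝ := (n.descFactorial r : ℝ) with hRn
  set Na : ℝ := (pairCount r l n a₀ : ℝ) with hNa
  have hRlpos : 0 < Rl := by
    rw [hRl]
    exact_mod_cast Nat.pos_of_ne_zero (fun h0 => absurd (Nat.descFactorial_eq_zero_iff_lt.mp h0)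
      (not_lt.mpr hrl))
  have hLpos : 0 < L := by
    rw [hL, Fintype.card_embedding_eq, Fintype.card_fin, Fintype.card_fin]
    exact_mod_cast Nat.pos_of_ne_zero (fun h0 => absurd (Nat.descFactorial_eq_zero_iff_lt.mp h0)
      (not_lt.mpr hln))
  have hNaRn : Na * Rn = L * Rl := by
    rw [hNa, hRn, hL, hRl, ← card_injF r n, ← card_injF r l]
    exact_mod_cast pairCount_eq (l := l) (G.inj a₀ ha₀)
  -- bound the sum of induced edge counts
  have hindle : ∀ g : Fin l ↪ Fin n, (((G.induce g g.injective).E).card : ℝ) ≤ Rl := by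
    intro g
    rw [hRl]
    exact_mod_cast E_card_le (G.induce g g.injective)
  have hfreele : ∀ g : Fin l ↪ Fin n, g ∉ Good →
      (((G.induce g g.injective).E).card : ℝ) ≤ x * Rl := by
    intro g hg
    rw [hGood, Finset.mem_filter] at hg
    push_neg at hg
    have hfree : (G.induce g g.injective).Free {⟨k, F⟩} := by
      intro F' hF'
      rw [Set.mem_singleton_iff] at hF'
      subst hF'
      exact hg (Finset.mem_univ g)
    have := le_trans (le_exNum hfree) hex
    rw [edgeCount_le_iff] at this
    calc (((G.induce g g.injective).E).card : ℝ) ≤ x * GDH.denom r J l * (Nat.card J : ℝ) := this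
      _ = x * Rl := by rw [mul_assoc, denom_mul, hRl]
  have hsumsplit : ∑ g : Fin l ↪ Fin n, (((G.induce g g.injective).E).card : ℝ)
      ≤ (Good.card : ℝ) * Rl + L * (x * Rl) := by
    rw [← Finset.sum_filter_add_sum_filter_not Finset.univ
      (fun g => g ∈ Good) (fun g => (((G.induce g g.injective).E).card : ℝ))]
    have hA : ∑ g ∈ Finset.univ.filter (fun g => g ∈ Good),
        (((G.induce g g.injective).E).card : ℝ) ≤ (Good.card : ℝ) * Rl := by
      calc ∑ g ∈ Finset.univ.filter (fun g => g ∈ Good),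
            (((G.induce g g.injective).E).card : ℝ)
          ≤ ∑ _g ∈ Finset.univ.filter (fun g => g ∈ Good), Rl :=
            Finset.sum_le_sum (fun g _ => hindle g)
        _ = ((Finset.univ.filter (fun g => g ∈ Good)).card : ℝ) * Rl := by
            rw [Finset.sum_const, nsmul_eq_mul]
        _ ≤ (Good.card : ℝ) * Rl := by
            apply mul_le_mul_of_nonneg_right _ (le_of_lt hRlpos)
            have : Finset.univ.filter (fun g => g ∈ Good) ⊆ Good := by
              intro g hg
              exact (Finset.mem_filter.mp hg).2
            exact_mod_cast Finset.card_le_card this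
    have hB : ∑ g ∈ Finset.univ.filter (fun g => g ∉ Good),
        (((G.induce g g.injective).E).card : ℝ) ≤ L * (x * Rl) := by
      calc ∑ g ∈ Finset.univ.filter (fun g => g ∉ Good),
            (((G.induce g g.injective).E).card : ℝ)
          ≤ ∑ g ∈ Finset.univ.filter (fun g => g ∉ Good), x * Rl :=
            Finset.sum_le_sum (fun g hg => hfreele g (Finset.mem_filter.mp hg).2)
        _ = ((Finset.univ.filter (fun g => g ∉ Good)).card : ℝ) * (x * Rl) := by
            rw [Finset.sum_const, nsmul_eq_mul]
        _ ≤ L * (x * Rl) := by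
            apply mul_le_mul_of_nonneg_right _ (by positivity)
            rw [hL]
            exact_mod_cast Finset.card_le_card (Finset.subset_univ _)
    linarith
  -- conclude Good is big
  have hGoodbig : δ * L ≤ (Good.card : ℝ) := by
    have hEq : (G.E.card : ℝ) * Na = ∑ g : Fin l ↪ Fin n, (((G.induce g g.injective).E).card : ℝ) := by
      have h3 := h1.symm.trans h2
      rw [huni] at h3
      rw [hNa]
      exact_mod_cast h3
    have hNapos : 0 ≤ Na := by rw [hNa]; positivity
    have hlhs : (x + δ) * (L * Rl) ≤ (G.E.card : ℝ) * Na := by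
      calc (x + δ) * (L * Rl) = (x + δ) * (Na * Rn) := by rw [hNaRn]
        _ = ((x + δ) * Rn) * Na := by ring
        _ ≤ (G.E.card : ℝ) * Na := mul_le_mul_of_nonneg_right hcardE hNapos
    have := le_trans hlhs (le_of_eq_of_le hEq hsumsplit)
    have h3 : δ * (L * Rl) ≤ (Good.card : ℝ) * Rl := by nlinarith
    have := le_of_mul_le_mul_right (by nlinarith : δ * L * Rl ≤ (Good.card : ℝ) * Rl) hRlpos
    exact this
  -- build the copies
  set φ : (Fin l ↪ Fin n) → (Fin k → Fin n) := fun g =>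
    if h : (G.induce g g.injective).ContainsCopy F then (fun i => g (h.choose i))
    else (fun _ => ⟨0, hn0⟩) with hφ
  set C : Finset (Fin k → Fin n) := Good.image φ with hC
  have hprop : ∀ f ∈ C, Function.Injective f ∧ ∀ a ∈ F.E, (fun i => f (a i)) ∈ G.E := by
    intro f hf
    rw [hC, Finset.mem_image] at hf
    obtain ⟨g, hgGood, rfl⟩ := hf
    rw [hGood, Finset.mem_filter] at hgGood
    have hg := hgGood.2
    have hφg : φ g = fun i => g (hg.choose i) := by rw [hφ]; exact dif_pos hg
    obtain ⟨hinj, hhom⟩ := hg.choose_spec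
    constructor
    · rw [hφg]
      exact fun i j hij => hinj (g.injective hij)
    · intro a ha
      rw [hφg]
      have := hhom a ha
      exact (Finset.mem_filter.mp this).2
  -- fiber bound
  set f₀ : Fin k → Fin n := fun i => Fin.castLE hkn i with hf₀
  have hf₀inj : Function.Injective f₀ := fun i j hij => Fin.castLE_injective hkn hij
  have hfiber : ∀ f ∈ C, (Good.filter (fun g => φ g = f)).card ≤ pairCount k l n f₀ := by
    intro f hf
    have hfinj : Function.Injective f := (hprop f hf).1
    rw [← pairCount_uniform hfinj hf₀inj]
    unfold pairCount
    apply Finset.card_le_card_of_injOn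
      (fun g : Fin l ↪ Fin n => (g, if h : (G.induce g g.injective).ContainsCopy F then h.choose
        else (fun _ => ⟨0, hl0⟩)))
    · intro g hg
      rw [Finset.mem_coe, Finset.mem_filter] at hg
      obtain ⟨hgGood, hgf⟩ := hg
      rw [hGood, Finset.mem_filter] at hgGood
      have hcon := hgGood.2
      rw [Finset.mem_coe, Finset.mem_filter]
      refine ⟨Finset.mem_univ _, ?_⟩
      simp only [dif_pos hcon]
      rw [← hgf, hφ]
      simp only [dif_pos hcon]
    · intro g₁ _ g₂ _ h
      exact congrArg Prod.fst h
  have hGoodC : (Good.card : ℝ) ≤ (pairCount k l n f₀ : ℝ) * (C.card : ℝ) := by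
    have := Finset.card_le_mul_card_image Good (pairCount k l n f₀)
      (fun f hf => hfiber f (by rwa [hC]))
    exact_mod_cast this
  -- final arithmetic
  refine ⟨C, hprop, ?_⟩
  set Rkl : ℝ := (l.descFactorial k : ℝ) with hRkl
  set Rkn : ℝ := (n.descFactorial k : ℝ) with hRkn
  have hRklpos : 0 < Rkl := by
    rw [hRkl]
    exact_mod_cast Nat.pos_of_ne_zero (fun h0 => absurd (Nat.descFactorial_eq_zero_iff_lt.mp h0)
      (not_lt.mpr hkl))
  have hRknpos : 0 < Rkn := by
    rw [hRkn]
    exact_mod_cast Nat.pos_of_ne_zero (fun h0 => absurd (Nat.descFactorial_eq_zero_iff_lt.mp h0)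
      (not_lt.mpr hkn))
  have hNk : (pairCount k l n f₀ : ℝ) * Rkn = L * Rkl := by
    rw [hRkn, hL, hRkl, ← card_injF k n, ← card_injF k l]
    exact_mod_cast pairCount_eq (l := l) hf₀inj
  have hNkpos : 0 < (pairCount k l n f₀ : ℝ) := by
    rcases (Nat.eq_zero_or_pos (pairCount k l n f₀)) with h0 | hpos
    · exfalso
      rw [h0] at hNk
      push_cast at hNk
      nlinarith
    · exact_mod_cast hpos
  -- δ * Rkn * Nk = δ * L * Rkl ≤ Nk * C.card * Rkl
  have hmain : δ * Rkn * (pairCount k l n f₀ : ℝ) ≤ (C.card : ℝ) * Rkl * (pairCount k l n f₀ : ℝ) := by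
    calc δ * Rkn * (pairCount k l n f₀ : ℝ) = δ * ((pairCount k l n f₀ : ℝ) * Rkn) := by ring
      _ = δ * (L * Rkl) := by rw [hNk]
      _ = (δ * L) * Rkl := by ring
      _ ≤ (Good.card : ℝ) * Rkl := mul_le_mul_of_nonneg_right hGoodbig (le_of_lt hRklpos)
      _ ≤ ((pairCount k l n f₀ : ℝ) * (C.card : ℝ)) * Rkl :=
          mul_le_mul_of_nonneg_right hGoodC (le_of_lt hRklpos)
      _ = (C.card : ℝ) * Rkl * (pairCount k l n f₀ : ℝ) := by ring
  exact le_of_mul_le_mul_right hmain hNkpos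

end Supersat

end BlowupAux

/-- The Turán density of a blowup equals the Turán density of the original GDH:
if `F` is a GDH of type `J` on `k` vertices and `t` is a `k`-tuple of positive integers,
then `π(F) = π(F(t))`. -/
theorem stmt4 (r : ℕ) (hr : 1 ≤ r) (J : Subgroup (Equiv.Perm (Fin r)))
    (k : ℕ) (F : GDH r J (Fin k)) (t : Fin k → ℕ) (ht : ∀ i, 0 < t i)
    (π₁ π₂ : ℝ)
    (h₁ : GDH.IsTuranDensity r J {⟨k, F⟩} π₁)
    (h₂ : GDH.IsTuranDensity r J {(F.blowup t).toFin} π₂) :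
    π₁ = π₂ := by
  classical
  open BlowupAux in
  rw [GDH.IsTuranDensity] at h₁ h₂
  by_cases hFE : F.E = ∅
  · -- degenerate case: F has no edges, no free GDHs exist for large n
    have hblowE : (F.blowup t).E = ∅ := by
      ext a
      simp [GDH.blowup, hFE]
    have htoFinE : ((F.blowup t).toFin).2.E = ∅ := by
      simp [GDH.toFin, GDH.relabel, hblowE]
      rfl
    have hzero1 : ∀ n, k ≤ n → GDH.densitySeq r J {⟨k, F⟩} n = 0 := by
      intro n hkn
      have hset : {x : ℝ | ∃ G : GDH r J (Fin n), G.Free {⟨k, F⟩} ∧ x = G.edgeCount} = ∅ := by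
        ext x
        simp only [Set.mem_setOf_eq, Set.mem_empty_iff_false, iff_false]
        rintro ⟨G, hfree, -⟩
        exact hfree ⟨k, F⟩ rfl ⟨fun i => Fin.castLE hkn i, Fin.castLE_injective hkn,
          fun a ha => absurd ha (by rw [hFE]; exact Finset.notMem_empty a)⟩
      rw [GDH.densitySeq, GDH.exNum, hset, Real.sSup_empty, zero_div]
    have hzero2 : ∀ n, ((F.blowup t).toFin).1 ≤ n →
        GDH.densitySeq r J {(F.blowup t).toFin} n = 0 := by
      intro n hkn
      have hset : {x : ℝ | ∃ G : GDH r J (Fin n), G.Free {(F.blowup t).toFin} ∧ x = G.edgeCount} = ∅ := by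
        ext x
        simp only [Set.mem_setOf_eq, Set.mem_empty_iff_false, iff_false]
        rintro ⟨G, hfree, -⟩
        exact hfree ((F.blowup t).toFin) rfl ⟨fun i => Fin.castLE hkn i, Fin.castLE_injective hkn,
          fun a ha => absurd ha (by rw [htoFinE]; exact Finset.notMem_empty a)⟩
      rw [GDH.densitySeq, GDH.exNum, hset, Real.sSup_empty, zero_div]
    have hπ₁ : π₁ = 0 := by
      refine tendsto_nhds_unique (Filter.Tendsto.congr' ?_ h₁) tendsto_const_nhds
      exact Filter.eventually_atTop.mpr ⟨k, fun n hn => hzero1 n hn⟩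
    have hπ₂ : π₂ = 0 := by
      refine tendsto_nhds_unique (Filter.Tendsto.congr' ?_ h₂) tendsto_const_nhds
      exact Filter.eventually_atTop.mpr ⟨((F.blowup t).toFin).1, fun n hn => hzero2 n hn⟩
    rw [hπ₁, hπ₂]
  · -- main case
    have hEne : F.E.Nonempty := Finset.nonempty_iff_ne_empty.mpr hFE
    have hrk : r ≤ k := by
      obtain ⟨a, ha⟩ := hEne
      have := Fintype.card_le_of_injective a (F.inj a ha)
      simpa using this
    have hk0 : 0 < k := lt_of_lt_of_le hr hrk
    have hblowNe : (F.blowup t).E.Nonempty := by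
      obtain ⟨a, ha⟩ := hEne
      refine ⟨fun i => ⟨a i, ⟨0, ht (a i)⟩⟩, ?_⟩
      simp only [GDH.blowup, Finset.mem_filter, Finset.mem_univ, true_and]
      exact ha
    have htoFinNe : ((F.blowup t).toFin).2.E.Nonempty := by
      simp only [GDH.toFin, GDH.relabel]
      exact Finset.Nonempty.image hblowNe _
    have hfree1 : ∀ n : ℕ, ∃ G : GDH r J (Fin n), G.Free {⟨k, F⟩} := by
      intro n
      refine ⟨emptyG r J _, emptyG_free ?_⟩
      rintro H hH
      rw [Set.mem_singleton_iff] at hH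
      subst hH
      exact hEne
    have hfree2 : ∀ n : ℕ, ∃ G : GDH r J (Fin n), G.Free {(F.blowup t).toFin} := by
      intro n
      refine ⟨emptyG r J _, emptyG_free ?_⟩
      rintro H hH
      rw [Set.mem_singleton_iff] at hH
      subst hH
      exact htoFinNe
    -- easy direction : π₁ ≤ π₂
    have hblowF : ∀ {n : ℕ} (G : GDH r J (Fin n)),
        G.ContainsCopy (F.blowup t) → G.ContainsCopy F := by
      rintro n G ⟨f, hf, hhom⟩
      refine ⟨fun v => f ⟨v, ⟨0, ht v⟩⟩, ?_, ?_⟩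
      · intro u v huv
        have := hf huv
        exact congrArg Sigma.fst this
      · intro a ha
        have hmem : (fun i => (⟨a i, ⟨0, ht (a i)⟩⟩ : (v : Fin k) × Fin (t v))) ∈ (F.blowup t).E := by
          simp only [GDH.blowup, Finset.mem_filter, Finset.mem_univ, true_and]
          exact ha
        exact hhom _ hmem
    have hmono : ∀ n, GDH.exNum r J n {⟨k, F⟩} ≤ GDH.exNum r J n {(F.blowup t).toFin} := by
      intro n
      apply csSup_le_csSup (exNum_bddAbove n _)
      · obtain ⟨G, hG⟩ := hfree1 n
        exact ⟨G.edgeCount, G, hG, rfl⟩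
      · rintro x ⟨G, hfree, rfl⟩
        refine ⟨G, ?_, rfl⟩
        rintro H hH
        rw [Set.mem_singleton_iff] at hH
        subst hH
        intro hcontain
        exact hfree ⟨k, F⟩ rfl (hblowF G ((contains_toFin_iff G (F.blowup t)).mp hcontain))
    have hseq : ∀ n, GDH.densitySeq r J {⟨k, F⟩} n ≤ GDH.densitySeq r J {(F.blowup t).toFin} n := by
      intro n
      rw [GDH.densitySeq, GDH.densitySeq]
      rcases eq_or_lt_of_le (denom_nonneg (J := J) n) with h0 | hpos
      · rw [← h0, div_zero, div_zero]
      · exact div_le_div_of_nonneg_right (hmono n) hpos.le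
    have hle12 : π₁ ≤ π₂ := le_of_tendsto_of_tendsto' h₁ h₂ hseq
    -- hard direction : π₂ ≤ π₁
    have hπ₁nonneg : 0 ≤ π₁ := by
      apply ge_of_tendsto h₁
      apply Filter.Eventually.of_forall
      intro n
      rw [GDH.densitySeq]
      exact div_nonneg (exNum_nonneg (hfree1 n)) (denom_nonneg n)
    have hrev : ∀ ε : ℝ, 0 < ε → π₂ ≤ π₁ + ε := by
      intro ε hε
      have hev : ∀ᶠ lx in Filter.atTop, GDH.densitySeq r J {⟨k, F⟩} lx < π₁ + ε/2 :=
        h₁.eventually_lt_const (by linarith)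
      obtain ⟨l₀, hl₀⟩ := Filter.eventually_atTop.mp hev
      set l : ℕ := max l₀ k with hldef
      have hkl : k ≤ l := le_max_right _ _
      have hrl : r ≤ l := le_trans hrk hkl
      have hl0 : 0 < l := lt_of_lt_of_le hk0 hkl
      have hld : GDH.densitySeq r J {⟨k, F⟩} l < π₁ + ε/2 := hl₀ l (le_max_left _ _)
      have hexl : GDH.exNum r J l {⟨k, F⟩} ≤ (π₁ + ε/2) * GDH.denom r J l := by
        have hDl : 0 < GDH.denom r J l := denom_pos hrl
        have heq : GDH.exNum r J l {⟨k, F⟩}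
            = GDH.densitySeq r J {⟨k, F⟩} l * GDH.denom r J l := by
          rw [GDH.densitySeq]
          field_simp
        rw [heq]
        exact mul_le_mul_of_nonneg_right (le_of_lt hld) (le_of_lt hDl)
      set T : ℕ := Finset.univ.sup t + 1 with hT
      have hRklpos : (0:ℝ) < (l.descFactorial k : ℝ) := by
        exact_mod_cast Nat.pos_of_ne_zero
          (fun h0 => absurd (Nat.descFactorial_eq_zero_iff_lt.mp h0) (not_lt.mpr hkl))
      set c₀ : ℝ := (ε/2) / ((l.descFactorial k : ℝ) * 2^k) with hc₀
      have hc₀pos : 0 < c₀ := by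
        rw [hc₀]
        positivity
      obtain ⟨n₁, hbox⟩ := exists_box T k c₀ hc₀pos
      set n₀ : ℕ := max n₁ (max l (2*k)) with hn₀def
      have hbound : ∀ n, n₀ ≤ n → GDH.densitySeq r J {(F.blowup t).toFin} n ≤ π₁ + ε := by
        intro n hn
        have hln : l ≤ n := le_trans (le_trans (le_max_left _ _) (le_max_right _ _)) hn
        have h2k : 2*k ≤ n := le_trans (le_trans (le_max_right _ _) (le_max_right _ _)) hn
        have hn₁ : n₁ ≤ n := le_trans (le_max_left _ _) hn
        have hrn : r ≤ n := le_trans hrl hln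
        have hkn : k ≤ n := le_trans hkl hln
        have hn0 : 0 < n := lt_of_lt_of_le hl0 hln
        have hDn : 0 < GDH.denom r J n := denom_pos hrn
        rw [GDH.densitySeq, div_le_iff₀ hDn]
        apply exNum_le (mul_nonneg (by linarith) (le_of_lt hDn))
        intro G hfree
        by_contra hcon
        push_neg at hcon
        obtain ⟨C, hCprop, hCcard⟩ := many_copies hrl hkl hln hn0 hl0 F G (π₁ + ε/2) (ε/2)
          (by linarith) (by linarith) hexl
          (by
            have : π₁ + ε/2 + ε/2 = π₁ + ε := by ring
            rw [this]
            exact le_of_lt hcon)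
        have hdesc : ((n:ℝ)/2)^k ≤ (n.descFactorial k : ℝ) := by
          have h1 := Nat.pow_sub_le_descFactorial n k
          have hcast : ((n+1-k:ℕ):ℝ) = (n:ℝ)+1-(k:ℝ) := by
            rw [Nat.cast_sub (by omega)]
            push_cast
            ring
          have hk2 : (2*k : ℝ) ≤ (n:ℝ) := by exact_mod_cast h2k
          calc ((n:ℝ)/2)^k ≤ ((n+1-k:ℕ):ℝ)^k := by
                apply pow_le_pow_left₀ (by positivity)
                rw [hcast]
                linarith
            _ ≤ (n.descFactorial k : ℝ) := by exact_mod_cast h1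
        have hCbig : c₀ * (n:ℝ)^k ≤ (C.card : ℝ) := by
          rw [hc₀, div_mul_eq_mul_div, div_le_iff₀ (by positivity)]
          calc (ε/2) * (n:ℝ)^k = (ε/2) * ((n:ℝ)/2)^k * 2^k := by
                rw [div_pow]
                field_simp
            _ ≤ (ε/2) * (n.descFactorial k : ℝ) * 2^k := by
                have := mul_le_mul_of_nonneg_left hdesc (by positivity : (0:ℝ) ≤ ε/2)
                exact mul_le_mul_of_nonneg_right this (by positivity)
            _ ≤ ((C.card:ℝ) * (l.descFactorial k : ℝ)) * 2^k :=
                mul_le_mul_of_nonneg_right hCcard (by positivity)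
            _ = (C.card:ℝ) * ((l.descFactorial k : ℝ) * 2^k) := by ring
        obtain ⟨S, hScard, hStrans⟩ := hbox n hn₁ C hCbig
        have htT : ∀ v, t v ≤ T := by
          intro v
          rw [hT]
          exact le_trans (Finset.le_sup (Finset.mem_univ v)) (Nat.le_succ _)
        have hsub : ∀ v : Fin k, ∃ S'' ⊆ S v, S''.card = t v := fun v =>
          Finset.exists_subset_card_eq (le_trans (htT v) (hScard v))
        choose S' hS'sub hS'card using hsub
        have hS'ne : ∀ v, ∃ zz, zz ∈ S' v := by
          intro v
          have : 0 < (S' v).card := by rw [hS'card]; exact ht v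
          exact Finset.card_pos.mp this
        choose z hz using hS'ne
        have hdisj : ∀ v u : Fin k, v ≠ u → ∀ x, x ∈ S' v → x ∉ S' u := by
          intro v u hvu x hxv hxu
          set w : Fin k → Fin n := fun q => if q = v then x else if q = u then x else z q with hw
          have hwS : ∀ q, w q ∈ S q := by
            intro q
            simp only [hw]
            by_cases hq1 : q = v
            · subst hq1; rw [if_pos rfl]; exact hS'sub q hxv
            · rw [if_neg hq1]
              by_cases hq2 : q = u
              · subst hq2; rw [if_pos rfl]; exact hS'sub q hxu
              · rw [if_neg hq2]; exact hS'sub q (hz q)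
          have hwC := hStrans w hwS
          have hwinj := (hCprop w hwC).1
          have hweq : w v = w u := by
            have hv1 : w v = x := by simp only [hw]; simp
            have hu1 : w u = x := by simp only [hw]; simp [Ne.symm hvu]
            rw [hv1, hu1]
          exact hvu (hwinj hweq)
        set g₀ : ((v : Fin k) × Fin (t v)) → Fin n :=
          fun p => (S' p.1).orderEmbOfFin (hS'card p.1) p.2 with hg₀
        have hg₀mem : ∀ p : ((v : Fin k) × Fin (t v)), g₀ p ∈ S' p.1 :=
          fun p => Finset.orderEmbOfFin_mem _ _ _
        have hg₀inj : Function.Injective g₀ := by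
          intro p q hpq
          have h1 : p.1 = q.1 := by
            by_contra hne
            exact hdisj p.1 q.1 hne (g₀ p) (hg₀mem p) (by rw [hpq]; exact hg₀mem q)
          obtain ⟨pv, pi⟩ := p
          obtain ⟨qv, qi⟩ := q
          simp only at h1
          subst h1
          have h2 : pi = qi := ((S' pv).orderEmbOfFin (hS'card pv)).injective hpq
          rw [h2]
        have hg₀hom : ∀ a ∈ (F.blowup t).E, (fun i => g₀ (a i)) ∈ G.E := by
          intro a ha
          have hb : (fun i => (a i).1) ∈ F.E := (Finset.mem_filter.mp ha).2
          set w : Fin k → Fin n := fun v =>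
            if h : ∃ i, (a i).1 = v then g₀ (a h.choose) else g₀ ⟨v, ⟨0, ht v⟩⟩ with hw
          have hwS : ∀ v, w v ∈ S v := by
            intro v
            simp only [hw]
            by_cases h : ∃ i, (a i).1 = v
            · rw [dif_pos h]
              have hmem := hg₀mem (a h.choose)
              rw [h.choose_spec] at hmem
              exact hS'sub v hmem
            · rw [dif_neg h]
              exact hS'sub v (hg₀mem ⟨v, ⟨0, ht v⟩⟩)
          have hwC := hStrans w hwS
          have hwhom := (hCprop w hwC).2
          have h3 := hwhom _ hb
          have h4 : (fun i => w ((fun i' => (a i').1) i)) = fun i => g₀ (a i) := by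
            funext i
            simp only
            simp only [hw]
            have hex2 : ∃ i', (a i').1 = (a i).1 := ⟨i, rfl⟩
            rw [dif_pos hex2]
            have hch : hex2.choose = i := F.inj _ hb hex2.choose_spec
            rw [hch]
          rw [h4] at h3
          exact h3
        have hcopy : G.ContainsCopy (F.blowup t) := ⟨g₀, hg₀inj, hg₀hom⟩
        exact hfree ((F.blowup t).toFin) rfl ((contains_toFin_iff G (F.blowup t)).mpr hcopy)
      have := le_of_tendsto h₂ (Filter.eventually_atTop.mpr ⟨n₀, hbound⟩)
      exact this
    have hle21 : π₂ ≤ π₁ := le_of_forall_pos_le_add hrev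
    linarith
end

section
/- (Characterization of degenerate families) Let 𝓕 be a family of GDHs of type J, and let S denote the single-edge GDH of type J, i.e., the GDH on r vertices whose tuple set is exactly one J-orbit of an injective r-tuple. Then π(𝓕) = 0 if and only if some member F ∈ 𝓕 admits an injective homomorphism into the t-blowup S(t) of S for some tuple t = (t_1,…,t_r) of positive integers. -/
open Finset Filter

section AuxBox
open Finset

theorem box_thm (T : ℕ) (hT : 0 < T) : ∀ (r : ℕ) (ε : ℝ), 0 < ε →
    ∃ n₀ : ℕ, 0 < n₀ ∧ ∀ n, n₀ ≤ n → ∀ E : Finset (Fin r → Fin n),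
      ε * (n : ℝ) ^ r ≤ E.card →
      ∃ A : Fin r → Finset (Fin n), (∀ i, (A i).card = T) ∧
        ∀ a : Fin r → Fin n, (∀ i, a i ∈ A i) → a ∈ E := by
  obtain ⟨k, rfl⟩ : ∃ k, T = k + 1 := ⟨T - 1, (Nat.succ_pred_eq_of_pos hT).symm⟩
  set T := k + 1 with hTdef
  intro r
  induction r with
  | zero =>
    intro ε hε
    refine ⟨1, one_pos, fun n hn E hE => ?_⟩
    have hE0 : E.Nonempty := by
      rw [← Finset.card_pos]
      by_contra h
      push_neg at h
      interval_cases h' : E.card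
      · simp [h'] at hE; linarith
    obtain ⟨b, hb⟩ := hE0
    exact ⟨fun i => i.elim0, fun i => i.elim0, fun a _ => by
      have : a = b := funext fun i => i.elim0
      rwa [this]⟩
  | succ r ih =>
    intro ε hε
    have hεT : (0:ℝ) < ε ^ T / 4 := by positivity
    obtain ⟨n₁, hn₁pos, hn₁⟩ := ih (ε ^ T / 4) hεT
    set N : ℕ := ⌈(T:ℝ)^2 * 4 / ε ^ T⌉₊ + 1 with hN
    refine ⟨max n₁ N, lt_of_lt_of_le hn₁pos (le_max_left _ _), fun n hn E hE => ?_⟩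
    have hnN : N ≤ n := le_trans (le_max_right _ _) hn
    have hn1 : 1 ≤ n := le_trans (Nat.one_le_iff_ne_zero.mpr (by positivity)) hnN
    have hnpos : (0:ℝ) < n := by exact_mod_cast hn1
    have hc1 : (T:ℝ)^2 ≤ ε ^ T / 4 * n := by
      have h1 : (T:ℝ)^2 * 4 / ε ^ T ≤ (N:ℝ) := by
        calc (T:ℝ)^2 * 4 / ε ^ T ≤ ⌈(T:ℝ)^2 * 4 / ε ^ T⌉₊ := Nat.le_ceil _
        _ ≤ (N:ℝ) := Nat.cast_le.mpr (Nat.le_succ _)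
      have h2 : (T:ℝ)^2 * 4 / ε ^ T ≤ (n:ℝ) := h1.trans (Nat.cast_le.mpr hnN)
      rw [div_le_iff₀ (by positivity)] at h2
      linarith
    classical
    -- degree sets
    set D : (Fin r → Fin n) → Finset (Fin n) :=
      fun a => univ.filter (fun v => (Fin.snoc a v : Fin (r+1) → Fin n) ∈ E) with hD
    -- claim 1 : sum of degrees = |E|
    have claim1 : ∑ a : Fin r → Fin n, (D a).card = E.card := by
      rw [Finset.card_eq_sum_card_fiberwise
        (f := fun b => Fin.init b) (t := univ) (fun x _ => mem_univ _)]
      refine Finset.sum_congr rfl fun a _ => ?_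
      refine Finset.card_bij' (fun v (_ : v ∈ D a) => (Fin.snoc a v : Fin (r+1) → Fin n))
        (fun b _ => b (Fin.last r)) ?_ ?_ ?_ ?_
      · intro v hv
        rw [hD] at hv
        simp only [mem_filter] at hv ⊢
        exact ⟨hv.2, Fin.init_snoc _ _⟩
      · intro b hb
        rw [mem_filter] at hb
        rw [hD]
        simp only [mem_filter]
        refine ⟨mem_univ _, ?_⟩
        rw [← hb.2, Fin.snoc_init_self]
        exact hb.1
      · intro v hv; exact Fin.snoc_last _ _
      · intro b hb
        rw [mem_filter] at hb
        obtain ⟨hb1, rfl⟩ := hb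
        exact Fin.snoc_init_self b
    -- common neighborhoods
    set Q : (Fin T → Fin n) → Finset (Fin r → Fin n) :=
      fun y => univ.filter (fun a => ∀ j, (Fin.snoc a (y j) : Fin (r+1) → Fin n) ∈ E) with hQ
    have claim2 : ∑ y : Fin T → Fin n, (Q y).card = ∑ a : Fin r → Fin n, (D a).card ^ T := by
      have h1 : ∀ y, (Q y).card = ∑ a : Fin r → Fin n, if (∀ j, y j ∈ D a) then 1 else 0 := by
        intro y
        rw [hQ, Finset.card_filter]
        refine Finset.sum_congr rfl fun a _ => ?_
        congr 1
        simp [hD]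
      simp_rw [h1]
      rw [Finset.sum_comm]
      refine Finset.sum_congr rfl fun a _ => ?_
      have h2 : ∑ y : Fin T → Fin n, (if (∀ j, y j ∈ D a) then 1 else 0)
          = (univ.filter (fun y : Fin T → Fin n => ∀ j, y j ∈ D a)).card :=
        (Finset.card_filter _ _).symm
      have h3 : univ.filter (fun y : Fin T → Fin n => ∀ j, y j ∈ D a)
          = Fintype.piFinset (fun _ : Fin T => D a) := by
        ext y
        simp [Fintype.mem_piFinset]
      rw [h2, h3, Fintype.card_piFinset]
      simp
    -- power mean
    have claim3 : ε ^ T * (n:ℝ) ^ (r + T) ≤ ∑ y : Fin T → Fin n, ((Q y).card : ℝ) := by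
      have hpm := pow_sum_div_card_le_sum_pow (s := (univ : Finset (Fin r → Fin n)))
        (f := fun a => ((D a).card : ℝ)) (fun i _ => by positivity) k
      have hcard : ((univ : Finset (Fin r → Fin n)).card : ℝ) = (n:ℝ) ^ r := by
        rw [Finset.card_univ]
        simp
      rw [hcard] at hpm
      have hsum : (E.card : ℝ) = ∑ a : Fin r → Fin n, ((D a).card : ℝ) := by
        rw [← claim1]; push_cast; ring
      have hrhs : ∑ y : Fin T → Fin n, ((Q y).card : ℝ)
          = ∑ a : Fin r → Fin n, ((D a).card : ℝ) ^ (k + 1) := by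
        have := congrArg (fun z : ℕ => (z : ℝ)) claim2
        push_cast at this
        simpa using this
      rw [hrhs]
      refine le_trans ?_ hpm
      rw [le_div_iff₀ (by positivity)]
      have hstep : ε ^ T * (n:ℝ) ^ (r + T) * ((n:ℝ) ^ r) ^ k = (ε * (n:ℝ) ^ (r+1)) ^ T := by
        rw [mul_pow, ← pow_mul, ← pow_mul, mul_assoc, ← pow_add]
        congr 1
        simp only [hTdef]
        ring
      rw [hstep]
      have h0 : (0:ℝ) ≤ ε * (n:ℝ) ^ (r+1) := by positivity
      calc (ε * (n:ℝ) ^ (r+1)) ^ T ≤ ((E.card : ℝ)) ^ T := pow_le_pow_left₀ h0 hE T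
      _ = (∑ a : Fin r → Fin n, ((D a).card : ℝ)) ^ (k+1) := by rw [hsum]
    -- bound on non-injective maps
    have pairbound : ∀ p : Fin T × Fin T, p.1 ≠ p.2 →
        (univ.filter (fun y : Fin T → Fin n => y p.1 = y p.2)).card ≤ n ^ k := by
      rintro ⟨j, l⟩ hjl
      simp only at hjl ⊢
      have := Finset.card_le_card_of_injOn
        (s := univ.filter (fun y : Fin T → Fin n => y j = y l))
        (f := fun y : Fin T → Fin n => (fun i : {i : Fin T // i ≠ l} => y i.1))
        (t := (univ : Finset ({i : Fin T // i ≠ l} → Fin n)))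
        (fun y _ => mem_univ _) ?_
      · refine le_trans this ?_
        rw [Finset.card_univ]
        have : Fintype.card {i : Fin T // i ≠ l} = k := by
          simp [Fintype.card_subtype_compl]
          omega
        simp [this]
      · intro y₁ hy₁ y₂ hy₂ hres
        rw [coe_filter] at hy₁ hy₂
        simp only [Set.mem_setOf_eq] at hy₁ hy₂
        funext i
        by_cases hi : i = l
        · subst hi
          have e1 : y₁ j = y₂ j := congrFun hres ⟨j, hjl⟩
          rw [← hy₁.2, ← hy₂.2] at *
          exact e1
        · exact congrFun hres ⟨i, hi⟩
    have hNI : (univ.filter (fun y : Fin T → Fin n => ¬ Function.Injective y)).card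
        ≤ T^2 * n ^ k := by
      have hsub : univ.filter (fun y : Fin T → Fin n => ¬ Function.Injective y)
          ⊆ ((univ : Finset (Fin T × Fin T)).filter (fun p => p.1 ≠ p.2)).biUnion
            (fun p => univ.filter (fun y : Fin T → Fin n => y p.1 = y p.2)) := by
        intro y hy
        rw [mem_filter] at hy
        rw [Function.not_injective_iff] at hy
        obtain ⟨a, b, hab, hne⟩ := hy.2
        rw [mem_biUnion]
        exact ⟨(a, b), by simp [hne], by simp [hab]⟩
      calc (univ.filter (fun y : Fin T → Fin n => ¬ Function.Injective y)).card
          ≤ _ := Finset.card_le_card hsub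
        _ ≤ ∑ p ∈ (univ : Finset (Fin T × Fin T)).filter (fun p => p.1 ≠ p.2),
            (univ.filter (fun y : Fin T → Fin n => y p.1 = y p.2)).card :=
          Finset.card_biUnion_le
        _ ≤ ∑ p ∈ (univ : Finset (Fin T × Fin T)).filter (fun p => p.1 ≠ p.2), n ^ k := by
          refine Finset.sum_le_sum fun p hp => ?_
          rw [mem_filter] at hp
          exact pairbound p hp.2
        _ = ((univ : Finset (Fin T × Fin T)).filter (fun p => p.1 ≠ p.2)).card * n ^ k := by
          rw [Finset.sum_const, smul_eq_mul]
        _ ≤ T^2 * n ^ k := by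
          gcongr
          calc _ ≤ (univ : Finset (Fin T × Fin T)).card := Finset.card_filter_le _ _
          _ = T^2 := by simp [sq]
    -- find a good injective y
    have key : ∃ y : Fin T → Fin n, Function.Injective y
        ∧ ε ^ T / 4 * (n:ℝ) ^ r ≤ ((Q y).card : ℝ) := by
      by_contra hcon
      push_neg at hcon
      have h4 : ∑ y ∈ univ.filter (fun y : Fin T → Fin n => Function.Injective y),
          ((Q y).card : ℝ) ≤ (n:ℝ)^T * (ε ^ T / 4 * (n:ℝ) ^ r) := by
        calc ∑ y ∈ univ.filter (fun y : Fin T → Fin n => Function.Injective y), ((Q y).card : ℝ)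
            ≤ (univ.filter (fun y : Fin T → Fin n => Function.Injective y)).card
              • (ε ^ T / 4 * (n:ℝ) ^ r) := by
              refine Finset.sum_le_card_nsmul _ _ _ fun y hy => ?_
              rw [mem_filter] at hy
              exact le_of_lt (hcon y hy.2)
          _ ≤ (n:ℝ)^T * (ε ^ T / 4 * (n:ℝ) ^ r) := by
              rw [nsmul_eq_mul]
              refine mul_le_mul_of_nonneg_right ?_ (by positivity)
              calc ((univ.filter (fun y : Fin T → Fin n => Function.Injective y)).card : ℝ)
                  ≤ ((univ : Finset (Fin T → Fin n)).card : ℝ) := by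
                    exact_mod_cast Finset.card_filter_le _ _
                _ = (n:ℝ)^T := by rw [Finset.card_univ]; simp
      have h5 : ∑ y ∈ univ.filter (fun y : Fin T → Fin n => ¬ Function.Injective y),
          ((Q y).card : ℝ) ≤ ((T:ℝ)^2 * (n:ℝ) ^ k) * (n:ℝ) ^ r := by
        calc ∑ y ∈ univ.filter (fun y : Fin T → Fin n => ¬ Function.Injective y), ((Q y).card : ℝ)
            ≤ (univ.filter (fun y : Fin T → Fin n => ¬ Function.Injective y)).card
              • ((n:ℝ) ^ r) := by
              refine Finset.sum_le_card_nsmul _ _ _ fun y hy => ?_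
              calc ((Q y).card : ℝ) ≤ ((univ : Finset (Fin r → Fin n)).card : ℝ) := by
                    exact_mod_cast Finset.card_le_univ _
              _ = (n:ℝ)^r := by rw [Finset.card_univ]; simp
          _ ≤ ((T:ℝ)^2 * (n:ℝ) ^ k) * (n:ℝ) ^ r := by
              rw [nsmul_eq_mul]
              refine mul_le_mul_of_nonneg_right ?_ (by positivity)
              calc ((univ.filter (fun y : Fin T → Fin n => ¬ Function.Injective y)).card : ℝ)
                  ≤ ((T^2 * n ^ k : ℕ) : ℝ) := by exact_mod_cast hNI
                _ = (T:ℝ)^2 * (n:ℝ)^k := by push_cast; ring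
      have hsplit : ∑ y : Fin T → Fin n, ((Q y).card : ℝ)
          = ∑ y ∈ univ.filter (fun y : Fin T → Fin n => Function.Injective y), ((Q y).card : ℝ)
          + ∑ y ∈ univ.filter (fun y : Fin T → Fin n => ¬ Function.Injective y), ((Q y).card : ℝ) :=
        (Finset.sum_filter_add_sum_filter_not _ _ _).symm
      have hb1 : (n:ℝ)^T * (ε ^ T / 4 * (n:ℝ) ^ r) = ε ^ T / 4 * (n:ℝ) ^ (r + T) := by
        rw [pow_add]; ring
      have hb2 : ((T:ℝ)^2 * (n:ℝ) ^ k) * (n:ℝ) ^ r ≤ ε ^ T / 4 * (n:ℝ) ^ (r + T) := by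
        have : (n:ℝ) ^ (r + T) = (n:ℝ) * (n:ℝ)^k * (n:ℝ)^r := by
          rw [pow_add]
          simp only [hTdef]
          rw [pow_succ]
          ring
        rw [this]
        calc ((T:ℝ)^2 * (n:ℝ) ^ k) * (n:ℝ) ^ r
            ≤ (ε ^ T / 4 * (n:ℝ) * (n:ℝ) ^ k) * (n:ℝ) ^ r := by gcongr
          _ = ε ^ T / 4 * ((n:ℝ) * (n:ℝ)^k * (n:ℝ)^r) := by ring
      have hpos : (0:ℝ) < ε ^ T * (n:ℝ) ^ (r + T) := by positivity
      have := claim3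
      rw [hsplit] at this
      nlinarith [this, h4, h5, hb1, hb2]
    obtain ⟨y, hyinj, hycard⟩ := key
    -- apply the induction hypothesis to Q y
    obtain ⟨A', hA'card, hA'box⟩ := hn₁ n (le_trans (le_max_left _ _) hn) (Q y) hycard
    refine ⟨Fin.snoc A' (univ.image y), ?_, ?_⟩
    · intro i
      refine Fin.lastCases ?_ ?_ i
      · rw [Fin.snoc_last]
        rw [Finset.card_image_of_injective _ hyinj]
        simp
      · intro j
        rw [Fin.snoc_castSucc]
        exact hA'card j
    · intro a ha
      have hinit : Fin.init a ∈ Q y := by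
        apply hA'box
        intro i
        have := ha (Fin.castSucc i)
        rwa [Fin.snoc_castSucc] at this
      have hlast : a (Fin.last r) ∈ univ.image y := by
        have := ha (Fin.last r)
        rwa [Fin.snoc_last] at this
      rw [mem_image] at hlast
      obtain ⟨j, _, hj⟩ := hlast
      rw [hQ, mem_filter] at hinit
      have := hinit.2 j
      rw [hj, Fin.snoc_init_self] at this
      exact this

end AuxBox

section AuxGDH

open GDH

variable {r : ℕ} {J : Subgroup (Equiv.Perm (Fin r))} {V W : Type} [DecidableEq V] [DecidableEq W]

theorem GDH.ContainsCopy.trans' {U : Type} [DecidableEq U] {G : GDH r J V} {H : GDH r J W}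
    {I : GDH r J U} (h1 : G.ContainsCopy H) (h2 : H.ContainsCopy I) : G.ContainsCopy I := by
  obtain ⟨f, hf, hfh⟩ := h1
  obtain ⟨e, he, heh⟩ := h2
  exact ⟨f ∘ e, hf.comp he, fun a ha => hfh _ (heh a ha)⟩

theorem GDH.box_to_copy {n T : ℕ} (hT : 0 < T) (G : GDH r J (Fin n)) (t : Fin r → ℕ)
    (htT : ∀ i, t i ≤ T) (A : Fin r → Finset (Fin n)) (hA : ∀ i, (A i).card = T)
    (hbox : ∀ a : Fin r → Fin n, (∀ i, a i ∈ A i) → a ∈ G.E) :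
    G.ContainsCopy ((GDH.singleEdge r J).blowup t) := by
  classical
  have hne : ∀ j, (A j).Nonempty := fun j => Finset.card_pos.mp (by rw [hA j]; exact hT)
  have hdisj : ∀ (i i' : Fin r) (v : Fin n), v ∈ A i → v ∈ A i' → i = i' := by
    intro i i' v hv hv'
    by_contra hii
    set a : Fin r → Fin n := fun j => if j = i then v else if j = i' then v else (hne j).choose
      with ha
    have hmem : ∀ j, a j ∈ A j := by
      intro j
      rw [ha]; dsimp only
      by_cases h1 : j = i
      · subst h1; rw [if_pos rfl]; exact hv
      · rw [if_neg h1]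
        by_cases h2 : j = i'
        · subst h2; rw [if_pos rfl]; exact hv'
        · rw [if_neg h2]; exact (hne j).choose_spec
    have haE := hbox a hmem
    have heq : a i = a i' := by
      rw [ha]; dsimp only
      rw [if_pos rfl, if_neg (fun h => hii h.symm), if_pos rfl]
    exact hii (G.inj a haE heq)
  set f : ((v : Fin r) × Fin (t v)) → Fin n :=
    fun x => ((A x.1).orderIsoOfFin (hA x.1) (Fin.castLE (htT x.1) x.2) : Fin n) with hfdef
  have hfA : ∀ x, f x ∈ A x.1 :=
    fun x => ((A x.1).orderIsoOfFin (hA x.1) (Fin.castLE (htT x.1) x.2)).2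
  refine ⟨f, ?_, ?_⟩
  · rintro ⟨i₁, j₁⟩ ⟨i₂, j₂⟩ hf12
    have h1 : i₁ = i₂ := hdisj _ _ (f ⟨i₁, j₁⟩) (hfA _) (by rw [hf12]; exact hfA _)
    subst h1
    have e1 : ((A i₁).orderIsoOfFin (hA i₁)) (Fin.castLE (htT i₁) j₁)
        = ((A i₁).orderIsoOfFin (hA i₁)) (Fin.castLE (htT i₁) j₂) := Subtype.coe_injective hf12
    have e2 := ((A i₁).orderIsoOfFin (hA i₁)).injective e1
    have h2 : j₁ = j₂ := Fin.castLE_injective _ e2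
    rw [h2]
  · intro a ha
    simp only [GDH.blowup, Finset.mem_filter, Finset.mem_univ, true_and] at ha
    simp only [GDH.singleEdge, Finset.mem_filter, Finset.mem_univ, true_and] at ha
    obtain ⟨π, hπJ, hπ⟩ := ha
    have hfst : ∀ i, (a i).1 = π i := fun i => congrFun hπ i
    set b : Fin r → Fin n := fun j => f (a (π⁻¹ j)) with hb
    have hbA : ∀ j, b j ∈ A j := by
      intro j
      have h := hfA (a (π⁻¹ j))
      rwa [hfst, Equiv.Perm.inv_def, Equiv.apply_symm_apply] at h
    have hcl := G.closed b (hbox b hbA) π hπJ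
    have heq : (fun i => f (a i)) = fun i => b (π i) := by
      funext i
      rw [hb]; dsimp only
      rw [Equiv.Perm.inv_def, Equiv.symm_apply_apply]
    rw [heq]
    exact hcl

/-- Push a GDH forward along an injective vertex map. -/
def GDH.push (G : GDH r J W) (g : W → V) (hg : Function.Injective g) : GDH r J V where
  E := G.E.image (fun a => fun i => g (a i))
  inj := by
    intro b hb
    rw [Finset.mem_image] at hb
    obtain ⟨a, ha, rfl⟩ := hb
    exact fun i j hij => G.inj a ha (hg hij)
  closed := by
    intro b hb π hπ
    rw [Finset.mem_image] at hb ⊢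
    obtain ⟨a, ha, rfl⟩ := hb
    exact ⟨fun i => a (π i), G.closed a ha π hπ, rfl⟩

theorem GDH.push_card (G : GDH r J W) (g : W → V) (hg : Function.Injective g) :
    (G.push g hg).E.card = G.E.card :=
  Finset.card_image_of_injective _ (fun a b h => funext fun i => hg (congrFun h i))

theorem GDH.singleEdge_card : (GDH.singleEdge r J).E.card = Nat.card J := by
  classical
  have hE : (GDH.singleEdge r J).E
      = Finset.image (fun π : J => ((π : Equiv.Perm (Fin r)) : Fin r → Fin r)) Finset.univ := by
    ext a
    simp only [GDH.singleEdge, Finset.mem_filter, Finset.mem_univ, true_and, Finset.mem_image]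
    constructor
    · rintro ⟨π, hπ, rfl⟩; exact ⟨⟨π, hπ⟩, rfl⟩
    · rintro ⟨⟨π, hπ⟩, rfl⟩; exact ⟨π, hπ, rfl⟩
  rw [hE, Finset.card_image_of_injective, Finset.card_univ, Nat.card_eq_fintype_card]
  intro π₁ π₂ h
  exact Subtype.ext (Equiv.coe_fn_injective h)

theorem GDH.blowup_const_card (q : ℕ) :
    ((GDH.singleEdge r J).blowup (fun _ => q)).E.card = Nat.card J * q ^ r := by
  classical
  have hcard : ((GDH.singleEdge r J).blowup (fun _ => q)).E.card
      = ((GDH.singleEdge r J).E ×ˢ (Finset.univ : Finset (Fin r → Fin q))).card := by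
    refine Finset.card_bij' (fun a _ => ((fun i => (a i).1), (fun i => (a i).2)))
      (fun p _ => fun i => ⟨p.1 i, p.2 i⟩) ?_ ?_ ?_ ?_
    · intro a ha
      simp only [GDH.blowup, Finset.mem_filter, Finset.mem_univ, true_and] at ha
      rw [Finset.mem_product]
      exact ⟨ha, Finset.mem_univ _⟩
    · intro p hp
      rw [Finset.mem_product] at hp
      simp only [GDH.blowup, Finset.mem_filter, Finset.mem_univ, true_and]
      exact hp.1
    · intro a ha
      funext i
      rfl
    · intro p hp
      rfl
  rw [hcard, Finset.card_product, GDH.singleEdge_card, Finset.card_univ]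
  congr 1
  simp

end AuxGDH

section AuxFree

open GDH

variable {r : ℕ} {J : Subgroup (Equiv.Perm (Fin r))}

theorem GDH.padded_free {n q : ℕ} (hr : 1 ≤ r) (hq : 1 ≤ q)
    (𝓕 : Set ((k : ℕ) × GDH r J (Fin k)))
    (Hno : ∀ F ∈ 𝓕, ∀ t : Fin r → ℕ, (∀ i, 0 < t i) →
      ¬ ((GDH.singleEdge r J).blowup t).ContainsCopy F.2)
    (g : ((v : Fin r) × Fin q) → Fin n) (hg : Function.Injective g) :
    (((GDH.singleEdge r J).blowup (fun _ => q)).push g hg).Free 𝓕 := by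
  classical
  intro F hF hcopy
  obtain ⟨f, hfinj, hfhom⟩ := hcopy
  set i₀ : Fin r := ⟨0, hr⟩ with hi₀
  set t' : Fin r → ℕ := fun v => q + (if v = i₀ then F.1 else 0) with ht'def
  have ht'q : ∀ v, q ≤ t' v := fun v => Nat.le_add_right _ _
  have ht'pos : ∀ v, 0 < t' v := fun v => lt_of_lt_of_le hq (ht'q v)
  have ht'i₀ : q + F.1 = t' i₀ := by simp [ht'def]
  set f' : Fin F.1 → ((v : Fin r) × Fin (t' v)) := fun x =>
    if hx : ∃ w : ((v : Fin r) × Fin q), g w = f x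
    then ⟨hx.choose.1, Fin.castLE (ht'q _) hx.choose.2⟩
    else ⟨i₀, Fin.cast ht'i₀ (Fin.natAdd q x)⟩ with hf'def
  have hval : ∀ (i₁ i₂ : Fin r) (b₁ : Fin (t' i₁)) (b₂ : Fin (t' i₂)),
      (⟨i₁, b₁⟩ : (v : Fin r) × Fin (t' v)) = ⟨i₂, b₂⟩ → i₁ = i₂ ∧ (b₁ : ℕ) = (b₂ : ℕ) := by
    rintro i₁ i₂ b₁ b₂ h
    obtain ⟨h1, h2⟩ := Sigma.mk.inj_iff.mp h
    subst h1
    exact ⟨rfl, congrArg Fin.val (eq_of_heq h2)⟩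
  apply Hno F hF t' ht'pos
  refine ⟨f', ?_, ?_⟩
  · intro x₁ x₂ h12
    rw [hf'def] at h12
    dsimp only at h12
    by_cases hx₁ : ∃ w : ((v : Fin r) × Fin q), g w = f x₁
      <;> by_cases hx₂ : ∃ w : ((v : Fin r) × Fin q), g w = f x₂
    · rw [dif_pos hx₁, dif_pos hx₂] at h12
      obtain ⟨h1, h2⟩ := hval _ _ _ _ h12
      rw [Fin.coe_castLE, Fin.coe_castLE] at h2
      have hww : hx₁.choose = hx₂.choose := Sigma.ext h1 (heq_of_eq (Fin.ext h2))
      have hf12 : f x₁ = f x₂ := by rw [← hx₁.choose_spec, ← hx₂.choose_spec, hww]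
      exact hfinj hf12
    · rw [dif_pos hx₁, dif_neg hx₂] at h12
      obtain ⟨h1, h2⟩ := hval _ _ _ _ h12
      exfalso
      rw [Fin.coe_castLE] at h2
      have hlt : (hx₁.choose.2 : ℕ) < q := (hx₁.choose.2).isLt
      simp only [Fin.coe_cast, Fin.coe_natAdd] at h2
      omega
    · rw [dif_neg hx₁, dif_pos hx₂] at h12
      obtain ⟨h1, h2⟩ := hval _ _ _ _ h12
      exfalso
      rw [Fin.coe_castLE] at h2
      have hlt : (hx₂.choose.2 : ℕ) < q := (hx₂.choose.2).isLt
      simp only [Fin.coe_cast, Fin.coe_natAdd] at h2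
      omega
    · rw [dif_neg hx₁, dif_neg hx₂] at h12
      obtain ⟨h1, h2⟩ := hval _ _ _ _ h12
      simp only [Fin.coe_cast, Fin.coe_natAdd] at h2
      exact Fin.ext (by omega)
  · intro a ha
    have hmem := hfhom a ha
    simp only [GDH.push, Finset.mem_image] at hmem
    obtain ⟨b, hbE, hgb⟩ := hmem
    have hgbi : ∀ i, g (b i) = f (a i) := fun i => congrFun hgb i
    have hf'eq : ∀ i, f' (a i) = ⟨(b i).1, Fin.castLE (ht'q _) (b i).2⟩ := by
      intro i
      have hex : ∃ w : ((v : Fin r) × Fin q), g w = f (a i) := ⟨b i, hgbi i⟩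
      rw [hf'def]
      dsimp only
      rw [dif_pos hex]
      have hwb : hex.choose = b i := hg (hex.choose_spec.trans (hgbi i).symm)
      rw [hwb]
    simp only [GDH.blowup, Finset.mem_filter, Finset.mem_univ, true_and] at hbE ⊢
    have hfst : (fun i => (f' (a i)).1) = fun i => (b i).1 := funext fun i => by rw [hf'eq i]
    rw [hfst]
    exact hbE

end AuxFree

section AuxFinal

open GDH Filter

variable {r : ℕ} {J : Subgroup (Equiv.Perm (Fin r))}

theorem desc_lower (n k : ℕ) : (n - k)^k ≤ n.descFactorial k := by
  rw [Nat.descFactorial_eq_prod_range]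
  calc (n - k)^k = ∏ _i ∈ Finset.range k, (n - k) := by
        rw [Finset.prod_const, Finset.card_range]
    _ ≤ ∏ i ∈ Finset.range k, (n - i) :=
      Finset.prod_le_prod' (fun i hi =>
        Nat.sub_le_sub_left (le_of_lt (Finset.mem_range.mp hi)) n)

theorem GDH.denom_eq (n : ℕ) :
    GDH.denom r J n = (n.descFactorial r : ℝ) / (Nat.card J) := by
  rw [GDH.denom, Nat.descFactorial_eq_factorial_mul_choose]
  push_cast
  ring

theorem GDH.denom_pos' {n : ℕ} (hrn : r ≤ n) : 0 < GDH.denom r J n := by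
  rw [GDH.denom_eq]
  have h1 : 0 < n.descFactorial r := Nat.pos_of_ne_zero
    (fun h => absurd (Nat.descFactorial_eq_zero_iff_lt.mp h) (not_lt.mpr hrn))
  have h2 : 0 < Nat.card J := Nat.card_pos
  have h1' : (0:ℝ) < (n.descFactorial r : ℝ) := by exact_mod_cast h1
  have h2' : (0:ℝ) < (Nat.card J : ℝ) := by exact_mod_cast h2
  exact div_pos h1' h2'

theorem GDH.denom_nonneg (n : ℕ) : 0 ≤ GDH.denom r J n := by
  rw [GDH.denom_eq]
  positivity

theorem GDH.denom_le (n : ℕ) : GDH.denom r J n ≤ (n:ℝ)^r / (Nat.card J) := by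
  rw [GDH.denom_eq]
  have h : (n.descFactorial r : ℝ) ≤ (n:ℝ)^r := by
    exact_mod_cast Nat.descFactorial_le_pow n r
  have h2 : (0:ℝ) < (Nat.card J : ℝ) := by exact_mod_cast (Nat.card_pos : 0 < Nat.card J)
  gcongr

theorem GDH.denom_lower {n : ℕ} (h2rn : 2*r ≤ n) :
    (n:ℝ)^r / 2^r / (Nat.card J) ≤ GDH.denom r J n := by
  rw [GDH.denom_eq]
  have hrn : r ≤ n := by omega
  have h2 : (0:ℝ) < (Nat.card J : ℝ) := by exact_mod_cast (Nat.card_pos : 0 < Nat.card J)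
  have hkey : (n:ℝ)^r / 2^r ≤ (n.descFactorial r : ℝ) := by
    have h1 : ((n - r : ℕ) : ℝ)^r ≤ (n.descFactorial r : ℝ) := by
      exact_mod_cast desc_lower n r
    have h3 : ((n - r : ℕ) : ℝ) = (n:ℝ) - r := by
      rw [Nat.cast_sub hrn]
    have h4 : (n:ℝ)/2 ≤ ((n - r:ℕ):ℝ) := by
      rw [h3]
      have : (2*r : ℝ) ≤ n := by exact_mod_cast h2rn
      linarith
    calc (n:ℝ)^r / 2^r = ((n:ℝ)/2)^r := by rw [div_pow]
      _ ≤ ((n - r:ℕ):ℝ)^r := by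
          apply pow_le_pow_left₀ (by positivity) h4
      _ ≤ (n.descFactorial r : ℝ) := h1
  gcongr

theorem GDH.edgeCount_nonneg {V : Type} [DecidableEq V] (G : GDH r J V) :
    0 ≤ G.edgeCount := by
  rw [GDH.edgeCount]; positivity

theorem GDH.edgeCount_le_pow {n : ℕ} (G : GDH r J (Fin n)) : G.edgeCount ≤ (n:ℝ)^r := by
  have hm : (1:ℝ) ≤ (Nat.card J : ℝ) := by
    exact_mod_cast (Nat.one_le_iff_ne_zero.mpr (Nat.card_pos (α := J)).ne')
  calc G.edgeCount ≤ (G.E.card : ℝ) := by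
        rw [GDH.edgeCount]
        exact div_le_self (by positivity) hm
    _ ≤ ((Finset.univ : Finset (Fin r → Fin n)).card : ℝ) := by
        exact_mod_cast Finset.card_le_univ _
    _ = (n:ℝ)^r := by
        rw [Finset.card_univ]
        simp

theorem GDH.exNum_bddAbove (n : ℕ) (𝓕 : Set ((k : ℕ) × GDH r J (Fin k))) :
    BddAbove {x : ℝ | ∃ G : GDH r J (Fin n), G.Free 𝓕 ∧ x = G.edgeCount} := by
  refine ⟨(n:ℝ)^r, ?_⟩
  rintro x ⟨G, -, rfl⟩
  exact G.edgeCount_le_pow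

theorem GDH.exNum_nonneg (n : ℕ) (𝓕 : Set ((k : ℕ) × GDH r J (Fin k))) :
    0 ≤ GDH.exNum r J n 𝓕 := by
  apply Real.sSup_nonneg
  rintro x ⟨G, -, rfl⟩
  exact G.edgeCount_nonneg

theorem GDH.densitySeq_nonneg (n : ℕ) (𝓕 : Set ((k : ℕ) × GDH r J (Fin k))) :
    0 ≤ GDH.densitySeq r J 𝓕 n :=
  div_nonneg (GDH.exNum_nonneg n 𝓕) (GDH.denom_nonneg n)

end AuxFinal

/-- Characterization of degenerate families: `π(𝓕) = 0` if and only if some member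
`F ∈ 𝓕` admits an injective homomorphism into a `t`-blowup of the single-edge GDH `S`
for some tuple `t` of positive integers. -/
theorem stmt5 (r : ℕ) (hr : 1 ≤ r) (J : Subgroup (Equiv.Perm (Fin r)))
    (𝓕 : Set ((k : ℕ) × GDH r J (Fin k))) (π𝓕 : ℝ)
    (hπ : GDH.IsTuranDensity r J 𝓕 π𝓕) :
    π𝓕 = 0 ↔ ∃ F ∈ 𝓕, ∃ t : Fin r → ℕ, (∀ i, 0 < t i) ∧
      ((GDH.singleEdge r J).blowup t).ContainsCopy F.2 := by
  classical
  have hmpos : 0 < Nat.card J := Nat.card_pos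
  have hmR : (0:ℝ) < (Nat.card J : ℝ) := by exact_mod_cast hmpos
  constructor
  · -- π(𝓕) = 0 implies some F embeds into a blowup of the single edge
    intro hzero
    by_contra hno
    push_neg at hno
    have h2r : (0:ℝ) < ((2*r : ℕ) : ℝ) := by exact_mod_cast (by omega : 0 < 2*r)
    set c : ℝ := (Nat.card J : ℝ) / ((2*r : ℕ):ℝ)^r with hc
    have hcpos : 0 < c := div_pos hmR (pow_pos h2r r)
    have hge : ∀ n : ℕ, r ≤ n → c ≤ GDH.densitySeq r J 𝓕 n := by
      intro n hrn
      have hrpos : 0 < r := hr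
      set q := n / r with hqdef
      have hq1 : 1 ≤ q := (Nat.one_le_div_iff hrpos).mpr hrn
      have hrq : r * q ≤ n := by
        rw [hqdef, mul_comm]
        exact Nat.div_mul_le_self n r
      have hcard : Fintype.card ((v : Fin r) × Fin q) ≤ Fintype.card (Fin n) := by
        simp only [Fintype.card_sigma, Fintype.card_fin, Finset.sum_const,
          Finset.card_univ, smul_eq_mul]
        simpa using hrq
      obtain ⟨g⟩ := Function.Embedding.nonempty_of_card_le hcard
      set Gn := (((GDH.singleEdge r J).blowup (fun _ => q)).push ⇑g g.injective) with hGn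
      have hfree : Gn.Free 𝓕 := GDH.padded_free hr hq1 𝓕 hno ⇑g g.injective
      have hEc : Gn.edgeCount = (q:ℝ)^r := by
        rw [hGn, GDH.edgeCount, GDH.push_card, GDH.blowup_const_card]
        push_cast
        field_simp
      have hex : (q:ℝ)^r ≤ GDH.exNum r J n 𝓕 :=
        le_csSup (GDH.exNum_bddAbove n 𝓕) ⟨Gn, hfree, hEc.symm⟩
      have hdpos := GDH.denom_pos' (J := J) hrn
      have hnpos : (0:ℝ) < (n:ℝ) := by exact_mod_cast lt_of_lt_of_le hrpos hrn
      have hn2rq : (n:ℝ) ≤ ((2*r:ℕ):ℝ) * (q:ℝ) := by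
        have h1 : n ≤ 2*r*q := by
          calc n = r * q + n % r := by rw [Nat.div_add_mod n r]
            _ ≤ r * q + r := Nat.add_le_add_left (le_of_lt (Nat.mod_lt n hrpos)) _
            _ ≤ r * q + r * q := Nat.add_le_add_left (Nat.le_mul_of_pos_right r hq1) _
            _ = 2*r*q := by ring
        exact_mod_cast h1
      have step1 : c ≤ (q:ℝ)^r * (Nat.card J) / (n:ℝ)^r := by
        rw [hc, div_le_div_iff₀ (pow_pos h2r r) (pow_pos hnpos r)]
        have hnr : (n:ℝ)^r ≤ (((2*r:ℕ):ℝ) * (q:ℝ))^r :=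
          pow_le_pow_left₀ hnpos.le hn2rq r
        calc (Nat.card J:ℝ) * (n:ℝ)^r
            ≤ (Nat.card J:ℝ) * (((2*r:ℕ):ℝ) * (q:ℝ))^r :=
              mul_le_mul_of_nonneg_left hnr hmR.le
          _ = (q:ℝ)^r * (Nat.card J) * ((2*r:ℕ):ℝ)^r := by rw [mul_pow]; ring
      have step2 : (q:ℝ)^r * (Nat.card J) / (n:ℝ)^r ≤ (q:ℝ)^r / GDH.denom r J n := by
        have hdle := GDH.denom_le (J := J) n
        have heq2 : (q:ℝ)^r * (Nat.card J) / (n:ℝ)^r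
            = (q:ℝ)^r / ((n:ℝ)^r / (Nat.card J : ℝ)) := by
          rw [div_div_eq_mul_div]
        rw [heq2]
        gcongr
      have step3 : (q:ℝ)^r / GDH.denom r J n ≤ GDH.densitySeq r J 𝓕 n := by
        rw [GDH.densitySeq]
        gcongr
      linarith
    have hle : c ≤ π𝓕 := ge_of_tendsto hπ (Filter.eventually_atTop.mpr ⟨r, hge⟩)
    rw [hzero] at hle
    exact absurd hle (not_le.mpr hcpos)
  · -- some F embeds into a blowup implies π(𝓕) = 0
    rintro ⟨F, hF, t, ht, hcopy⟩
    have hlim : Filter.Tendsto (GDH.densitySeq r J 𝓕) Filter.atTop (nhds 0) := by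
      rw [Metric.tendsto_atTop]
      intro ε hε
      set T := Finset.univ.sup t + 1 with hT
      have hTpos : 0 < T := Nat.succ_pos _
      have htT : ∀ i, t i ≤ T :=
        fun i => le_trans (Finset.le_sup (Finset.mem_univ i)) (Nat.le_succ _)
      have hδ : (0:ℝ) < ε/2/2^r := by positivity
      obtain ⟨n₀, hn₀pos, hbox⟩ := box_thm T hTpos r (ε/2/2^r) hδ
      refine ⟨max n₀ (2*r + 1), fun n hn => ?_⟩
      have hn₀n : n₀ ≤ n := le_trans (le_max_left _ _) hn
      have h2rn : 2*r ≤ n := by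
        have := le_trans (le_max_right _ _) hn
        omega
      have hrn : r ≤ n := by omega
      have hdpos := GDH.denom_pos' (J := J) hrn
      rw [Real.dist_eq, sub_zero, abs_of_nonneg (GDH.densitySeq_nonneg n 𝓕)]
      rw [GDH.densitySeq, div_lt_iff₀ hdpos]
      have hkey : ∀ G : GDH r J (Fin n), G.Free 𝓕 →
          G.edgeCount ≤ ε/2 * GDH.denom r J n := by
        intro G hGfree
        by_contra hgt
        push_neg at hgt
        have hcard : (ε/2/2^r) * (n:ℝ)^r ≤ (G.E.card : ℝ) := by
          have h1 : ε/2 * GDH.denom r J n < (G.E.card:ℝ)/(Nat.card J : ℝ) := hgt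
          have h2 := GDH.denom_lower (J := J) h2rn
          have h3 : ε/2 * ((n:ℝ)^r / 2^r / (Nat.card J : ℝ))
              ≤ ε/2 * GDH.denom r J n := by
            apply mul_le_mul_of_nonneg_left h2 (by positivity)
          have h4 : ε/2 * ((n:ℝ)^r / 2^r / (Nat.card J : ℝ)) < (G.E.card:ℝ)/(Nat.card J : ℝ) :=
            lt_of_le_of_lt h3 h1
          rw [lt_div_iff₀ hmR] at h4
          have h6 : ε/2 * ((n:ℝ)^r / 2^r / (Nat.card J : ℝ)) * (Nat.card J : ℝ)
              = ε/2/2^r * (n:ℝ)^r := by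
            field_simp
          rw [h6] at h4
          exact h4.le
        obtain ⟨A, hAcard, hAbox⟩ := hbox n hn₀n G.E hcard
        have hcopy2 := GDH.box_to_copy hTpos G t htT A hAcard hAbox
        exact hGfree F hF (hcopy2.trans' hcopy)
      have hsup : GDH.exNum r J n 𝓕 ≤ ε/2 * GDH.denom r J n := by
        apply Real.sSup_le
        · rintro x ⟨G, hGf, rfl⟩
          exact hkey G hGf
        · positivity
      have : ε/2 * GDH.denom r J n < ε * GDH.denom r J n := by
        apply mul_lt_mul_of_pos_right (by linarith) hdpos
      linarith
    exact tendsto_nhds_unique hπ hlim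
end

section
/- Let 𝓕 be a family of GDHs of type J, and let S denote the single-edge GDH of type J on r vertices. If no member of 𝓕 admits an injective homomorphism into any t-blowup of S (t a tuple of positive integers), then π(𝓕) ≥ m/r^r. -/
open Finset Filter

section AuxStmt6

open GDH

variable {r : ℕ} {J : Subgroup (Equiv.Perm (Fin r))}

/-- Equivalence between the vertex set of the balanced blowup and `Fin (r*c)`. -/
noncomputable def sigmaEquivAux (r c : ℕ) :
    ((v : Fin r) × Fin ((fun _ : Fin r => c) v)) ≃ Fin (r * c) :=
  Fintype.equivFinOfCardEq (by simp [Fintype.card_sigma])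

lemma card_blowup_edge_ge (r c : ℕ) (J : Subgroup (Equiv.Perm (Fin r))) :
    Nat.card J * c ^ r ≤ ((GDH.singleEdge r J).blowup (fun _ => c)).E.card := by
  classical
  haveI : Fintype ↥J := Fintype.ofFinite _
  set Φ : ↥J × (Fin r → Fin c) → (Fin r → ((v : Fin r) × Fin ((fun _ : Fin r => c) v))) :=
    fun p i => ⟨(p.1 : Equiv.Perm (Fin r)) i, p.2 i⟩ with hΦ
  have hmem : ∀ p : ↥J × (Fin r → Fin c),
      Φ p ∈ ((GDH.singleEdge r J).blowup (fun _ => c)).E := by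
    intro p
    simp only [GDH.blowup, Finset.mem_filter, Finset.mem_univ, true_and]
    simp only [GDH.singleEdge, Finset.mem_filter, Finset.mem_univ, true_and]
    exact ⟨(p.1 : Equiv.Perm (Fin r)), p.1.2, rfl⟩
  have hinj : Function.Injective Φ := by
    intro p q hpq
    have h1 : ∀ i, (p.1 : Equiv.Perm (Fin r)) i = (q.1 : Equiv.Perm (Fin r)) i ∧ p.2 i = q.2 i := by
      intro i
      have := congrFun hpq i
      simp only [hΦ, Sigma.mk.inj_iff] at this
      exact ⟨this.1, eq_of_heq this.2⟩
    refine Prod.ext ?_ ?_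
    · exact Subtype.ext (Equiv.ext fun i => (h1 i).1)
    · exact funext fun i => (h1 i).2
  calc Nat.card J * c ^ r = Fintype.card (↥J × (Fin r → Fin c)) := by
        simp [Nat.card_eq_fintype_card, Fintype.card_fun]
    _ = (Finset.univ : Finset (↥J × (Fin r → Fin c))).card := by
        rw [Finset.card_univ]
    _ ≤ ((GDH.singleEdge r J).blowup (fun _ => c)).E.card :=
        Finset.card_le_card_of_injOn Φ (fun p _ => hmem p) hinj.injOn

lemma relabel_card {V W : Type} [DecidableEq V] [DecidableEq W]
    (G : GDH r J V) (e : V ≃ W) : (G.relabel e).E.card = G.E.card := by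
  apply Finset.card_image_of_injective
  intro a b hab
  exact funext fun i => e.injective (congrFun hab i)

/-- The balanced blowup of the single edge, relabelled to `Fin (r*c)`. -/
noncomputable def GcAux (r : ℕ) (J : Subgroup (Equiv.Perm (Fin r))) (c : ℕ) :
    GDH r J (Fin (r * c)) :=
  ((GDH.singleEdge r J).blowup (fun _ => c)).relabel (sigmaEquivAux r c)

lemma GcAux_free (r : ℕ) (J : Subgroup (Equiv.Perm (Fin r)))
    (𝓕 : Set ((k : ℕ) × GDH r J (Fin k)))
    (h : ∀ F ∈ 𝓕, ∀ t : Fin r → ℕ, (∀ i, 0 < t i) →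
      ¬ ((GDH.singleEdge r J).blowup t).ContainsCopy F.2)
    (c : ℕ) (hc : 0 < c) : (GcAux r J c).Free 𝓕 := by
  intro F hF hcopy
  obtain ⟨f, _hf, hmap⟩ := hcopy
  refine h F hF (fun _ => c) (fun _ => hc) ⟨fun w => (sigmaEquivAux r c).symm (f w),
    fun a b hab => _hf ((sigmaEquivAux r c).symm.injective hab), ?_⟩
  intro a ha
  have := hmap a ha
  simp only [GcAux, GDH.relabel, Finset.mem_image] at this
  obtain ⟨b, hb, hab⟩ := this
  have : (fun i => (sigmaEquivAux r c).symm (f (a i))) = b := by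
    funext i
    have := congrFun hab i
    simp [← this]
  rwa [this]

lemma tendsto_Laux (r : ℕ) (hr : 1 ≤ r) (J : Subgroup (Equiv.Perm (Fin r))) :
    Filter.Tendsto (fun c : ℕ => ((c : ℝ) ^ r) / GDH.denom r J (r * c)) Filter.atTop
      (nhds ((Nat.card J : ℝ) / (r : ℝ) ^ r)) := by
  have hm : (0 : ℝ) < Nat.card J := by exact_mod_cast Nat.card_pos
  have hr0 : (0 : ℝ) < r := by exact_mod_cast hr
  -- the auxiliary limit
  have key : Filter.Tendsto
      (fun c : ℕ => (Nat.card J : ℝ) * ∏ i ∈ Finset.range r, (1 / ((r : ℝ) - i / c)))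
      Filter.atTop (nhds ((Nat.card J : ℝ) / (r : ℝ) ^ r)) := by
    have hprod : Filter.Tendsto
        (fun c : ℕ => ∏ i ∈ Finset.range r, (1 / ((r : ℝ) - i / c)))
        Filter.atTop (nhds (∏ _i ∈ Finset.range r, (1 / (r : ℝ)))) := by
      apply tendsto_finset_prod
      intro i _
      have h1 : Filter.Tendsto (fun c : ℕ => (r : ℝ) - i / c) Filter.atTop (nhds ((r : ℝ) - 0)) :=
        tendsto_const_nhds.sub (tendsto_const_div_atTop_nhds_zero_nat (i : ℝ))
      rw [sub_zero] at h1
      simpa only [one_div] using h1.inv₀ (ne_of_gt hr0)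
    have := hprod.const_mul (Nat.card J : ℝ)
    convert this using 2
    rw [Finset.prod_const, Finset.card_range, one_div, inv_pow, div_eq_mul_inv]
  refine key.congr' ?_
  filter_upwards [Filter.eventually_ge_atTop 1] with c hc
  have hc0 : (0 : ℝ) < c := by exact_mod_cast hc
  have hsub : ∀ i ∈ Finset.range r, i ≤ r * c := fun i hi =>
    le_trans (le_of_lt (Finset.mem_range.mp hi)) (Nat.le_mul_of_pos_right r hc)
  have hdesc : ((r.factorial : ℝ) * ((r * c).choose r)) =
      ∏ i ∈ Finset.range r, ((r : ℝ) * c - i) := by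
    have h1 : (r * c).descFactorial r = ∏ i ∈ Finset.range r, (r * c - i) :=
      Nat.descFactorial_eq_prod_range _ _
    have h2 : (r * c).descFactorial r = r.factorial * (r * c).choose r :=
      Nat.descFactorial_eq_factorial_mul_choose _ _
    rw [← Nat.cast_mul, ← h2, h1, Nat.cast_prod]
    refine Finset.prod_congr rfl fun i hi => ?_
    rw [Nat.cast_sub (hsub i hi)]
    push_cast
    ring
  have hfac : ∀ i ∈ Finset.range r, (1 : ℝ) / ((r : ℝ) - i / c) = (c : ℝ) / ((r : ℝ) * c - i) := by
    intro i hi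
    have hilt : (i : ℝ) < r := by exact_mod_cast Finset.mem_range.mp hi
    have hint : i < r * c := lt_of_lt_of_le (Finset.mem_range.mp hi) (Nat.le_mul_of_pos_right r hc)
    have hd1 : (0 : ℝ) < (r : ℝ) * c - i := by
      have : (i : ℝ) < (r : ℝ) * c := by exact_mod_cast hint
      linarith
    have hd2 : (0 : ℝ) < (r : ℝ) - i / c := by
      rw [sub_pos, div_lt_iff₀ hc0]
      nlinarith
    rw [div_eq_div_iff (ne_of_gt hd2) (ne_of_gt hd1)]
    field_simp
  calc (Nat.card J : ℝ) * ∏ i ∈ Finset.range r, (1 / ((r : ℝ) - i / c))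
      = (Nat.card J : ℝ) * ∏ i ∈ Finset.range r, ((c : ℝ) / ((r : ℝ) * c - i)) := by
        rw [Finset.prod_congr rfl hfac]
    _ = (Nat.card J : ℝ) * ((c : ℝ) ^ r / ∏ i ∈ Finset.range r, ((r : ℝ) * c - i)) := by
        rw [Finset.prod_div_distrib, Finset.prod_const, Finset.card_range]
    _ = ((c : ℝ) ^ r) / GDH.denom r J (r * c) := by
        rw [GDH.denom, ← hdesc]
        push_cast
        field_simp

end AuxStmt6

/-- If no member of `𝓕` admits an injective homomorphism into any `t`-blowup of the
single-edge GDH `S` of type `J`, then `π(𝓕) ≥ m/r^r`. -/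
theorem stmt6 (r : ℕ) (hr : 1 ≤ r) (J : Subgroup (Equiv.Perm (Fin r)))
    (𝓕 : Set ((k : ℕ) × GDH r J (Fin k))) (π𝓕 : ℝ)
    (hπ : GDH.IsTuranDensity r J 𝓕 π𝓕)
    (h : ∀ F ∈ 𝓕, ∀ t : Fin r → ℕ, (∀ i, 0 < t i) →
      ¬ ((GDH.singleEdge r J).blowup t).ContainsCopy F.2) :
    (Nat.card J : ℝ) / (r : ℝ) ^ r ≤ π𝓕 := by
  classical
  have hm : (0:ℝ) < Nat.card J := by exact_mod_cast Nat.card_pos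
  have hmul : Filter.Tendsto (fun c : ℕ => r * c) atTop atTop :=
    tendsto_atTop_mono (fun c => Nat.le_mul_of_pos_left c hr) tendsto_id
  have hsub : Filter.Tendsto (fun c : ℕ => GDH.densitySeq r J 𝓕 (r * c)) atTop (nhds π𝓕) :=
    hπ.comp hmul
  have hL := tendsto_Laux r hr J
  refine le_of_tendsto_of_tendsto hL hsub ?_
  filter_upwards [eventually_ge_atTop 1] with c hc
  have hc0 : 0 < c := hc
  have hdenom : 0 < GDH.denom r J (r * c) := by
    apply mul_pos (div_pos (by exact_mod_cast r.factorial_pos) hm)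
    exact_mod_cast Nat.choose_pos (Nat.le_mul_of_pos_right r hc0)
  have hex : ((c:ℝ)) ^ r ≤ GDH.exNum r J (r * c) 𝓕 := by
    have hbdd : BddAbove {x : ℝ | ∃ G : GDH r J (Fin (r * c)), G.Free 𝓕 ∧ x = G.edgeCount} := by
      refine ⟨(((r * c) ^ r : ℕ) : ℝ), ?_⟩
      rintro x ⟨G, -, rfl⟩
      have hcard : (G.E.card : ℝ) ≤ (((r * c) ^ r : ℕ) : ℝ) := by
        have h0 : G.E.card ≤ (r * c) ^ r := by
          have := Finset.card_le_univ (s := G.E)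
          simpa [Fintype.card_fun] using this
        exact_mod_cast h0
      have hm1 : (1:ℝ) ≤ Nat.card J := by exact_mod_cast Nat.card_pos
      calc G.edgeCount ≤ (G.E.card : ℝ) := by
            rw [GDH.edgeCount]
            exact div_le_self (by positivity) hm1
        _ ≤ _ := hcard
    have hmem : (GcAux r J c).edgeCount ∈
        {x : ℝ | ∃ G : GDH r J (Fin (r * c)), G.Free 𝓕 ∧ x = G.edgeCount} :=
      ⟨GcAux r J c, GcAux_free r J 𝓕 h c hc0, rfl⟩
    have h1 : (GcAux r J c).edgeCount ≤ GDH.exNum r J (r * c) 𝓕 := le_csSup hbdd hmem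
    refine le_trans ?_ h1
    rw [GDH.edgeCount, GcAux, relabel_card]
    rw [le_div_iff₀ hm]
    have := card_blowup_edge_ge r c J
    calc (c:ℝ) ^ r * Nat.card J = ((Nat.card J * c ^ r : ℕ) : ℝ) := by push_cast; ring
      _ ≤ _ := by exact_mod_cast this
  rw [GDH.densitySeq]
  gcongr
end
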